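/- arXiv:math/0412086 — 5 statements merged into one kernel-verified Lean document; each statement's English description precedes it below -/
import Mathlib

section
/- The map (z₀, z₁, z₂) ↦ (z₀²z₂, z₁²z₂, z₀z₁z₂) is a bijection from the set {(z₀, z₁, z₂) ∈ ℤ³ : z₀ > 0, z₂ > 0, z₁ ≠ 0, gcd(z₀, z₁) = 1} onto the set {(x₀, x₁, x₂) ∈ ℤ³ : x₀ > 0, x₁ > 0, x₂ ≠ 0, x₀x₁ = x₂²}. -/
private lemma gcd_sq_mul (a b c : ℤ) (h : Int.gcd a b = 1) :
    Int.gcd (a ^ 2 * c) (b ^ 2 * c) = c.natAbs := by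
  rw [Int.gcd_mul_right]
  have h2 : Int.gcd (a ^ 2) (b ^ 2) = 1 :=
    Int.isCoprime_iff_gcd_eq_one.mp ((Int.isCoprime_iff_gcd_eq_one.mpr h).pow)
  rw [h2, one_mul]

theorem stmt5 :
    Set.BijOn
      (fun z : ℤ × ℤ × ℤ => (z.1 ^ 2 * z.2.2, z.2.1 ^ 2 * z.2.2, z.1 * z.2.1 * z.2.2))
      {z : ℤ × ℤ × ℤ | 0 < z.1 ∧ 0 < z.2.2 ∧ z.2.1 ≠ 0 ∧ Int.gcd z.1 z.2.1 = 1}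
      {x : ℤ × ℤ × ℤ | 0 < x.1 ∧ 0 < x.2.1 ∧ x.2.2 ≠ 0 ∧ x.1 * x.2.1 = x.2.2 ^ 2} := by
  refine ⟨?_, ?_, ?_⟩
  · -- MapsTo
    rintro ⟨a, b, c⟩ ⟨ha, hc, hb, hg⟩
    refine ⟨mul_pos (by positivity) hc, mul_pos (by positivity) hc,
      mul_ne_zero (mul_ne_zero ha.ne' hb) hc.ne', by ring⟩
  · -- InjOn
    rintro ⟨a, b, c⟩ ⟨ha, hc, hb, hg⟩ ⟨a', b', c'⟩ ⟨ha', hc', hb', hg'⟩ heq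
    dsimp only at ha hc hb hg ha' hc' hb' hg' heq
    simp only [Prod.mk.injEq] at heq ⊢
    obtain ⟨h1, h2, h3⟩ := heq
    have hcc : c = c' := by
      have hn : c.natAbs = c'.natAbs := by
        rw [← gcd_sq_mul a b c hg, h1, h2, gcd_sq_mul a' b' c' hg']
      omega
    subst hcc
    have haa : a = a' := by
      have h1' : a ^ 2 = a' ^ 2 := mul_right_cancel₀ hc.ne' h1
      nlinarith
    subst haa
    have hbb : b = b' := by
      have := mul_right_cancel₀ hc.ne' h3
      exact mul_left_cancel₀ ha.ne' this
    exact ⟨rfl, hbb, rfl⟩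
  · -- SurjOn
    rintro ⟨x0, x1, x2⟩ ⟨h0, h1, h2, heq⟩
    dsimp only at h0 h1 h2 heq
    set d : ℤ := (Int.gcd x0 x1 : ℤ) with hd
    have hgpos : 0 < Int.gcd x0 x1 := Int.gcd_pos_iff.mpr (Or.inl h0.ne')
    have hdpos : 0 < d := Int.natCast_pos.mpr hgpos
    obtain ⟨a', ha'⟩ : d ∣ x0 := Int.gcd_dvd_left x0 x1
    obtain ⟨b', hb'⟩ : d ∣ x1 := Int.gcd_dvd_right x0 x1
    have ha'pos : 0 < a' := by nlinarith
    have hb'pos : 0 < b' := by nlinarith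
    have hcop : Int.gcd a' b' = 1 := by
      have := Int.gcd_div_gcd_div_gcd hgpos
      rwa [← hd, ha', hb', Int.mul_ediv_cancel_left _ hdpos.ne',
        Int.mul_ediv_cancel_left _ hdpos.ne'] at this
    have hdvd2 : d ^ 2 ∣ x2 ^ 2 := ⟨a' * b', by rw [← heq, ha', hb']; ring⟩
    obtain ⟨t, ht⟩ : d ∣ x2 := (Int.pow_dvd_pow_iff two_ne_zero).mp hdvd2
    have hab : a' * b' = t ^ 2 := by
      have h' : d ^ 2 * (a' * b') = d ^ 2 * t ^ 2 := by
        rw [ha', hb', ht] at heq; linear_combination heq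
      exact mul_left_cancel₀ (pow_ne_zero 2 hdpos.ne') h'
    obtain ⟨a0, ha0⟩ := Int.sq_of_isCoprime (Int.isCoprime_iff_gcd_eq_one.mpr hcop) hab
    obtain ⟨b0, hb0⟩ := Int.sq_of_isCoprime
      (Int.isCoprime_iff_gcd_eq_one.mpr hcop).symm (by rw [mul_comm]; exact hab)
    have ha2 : a' = a0 ^ 2 := by rcases ha0 with h | h; exacts [h, by nlinarith [sq_nonneg a0]]
    have hb2 : b' = b0 ^ 2 := by rcases hb0 with h | h; exacts [h, by nlinarith [sq_nonneg b0]]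
    have ha0ne : a0 ≠ 0 := by rintro rfl; simp at ha2; omega
    have hb0ne : b0 ≠ 0 := by rintro rfl; simp at hb2; omega
    set A := |a0| with hA
    set B := |b0| with hB
    have hApos : 0 < A := abs_pos.mpr ha0ne
    have hBpos : 0 < B := abs_pos.mpr hb0ne
    have hA2 : A ^ 2 = a' := by rw [hA, sq_abs, ha2]
    have hB2 : B ^ 2 = b' := by rw [hB, sq_abs, hb2]
    have hgAB : Int.gcd A B = 1 := by
      have hc' : IsCoprime a0 b0 := by
        have := Int.isCoprime_iff_gcd_eq_one.mpr hcop
        rw [ha2, hb2] at this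
        exact ((IsCoprime.pow_left_iff two_pos).mp ((IsCoprime.pow_right_iff two_pos).mp this))
      have : Int.gcd a0 b0 = 1 := Int.isCoprime_iff_gcd_eq_one.mp hc'
      simp only [hA, hB, Int.gcd, Int.natAbs_abs]
      exact this
    have htsq : (t - A * B) * (t + A * B) = 0 := by
      have : t ^ 2 = (A * B) ^ 2 := by rw [mul_pow, hA2, hB2, ← hab]
      nlinarith
    rcases mul_eq_zero.mp htsq with h | h
    · refine ⟨⟨A, B, d⟩, ⟨hApos, hdpos, hBpos.ne', hgAB⟩, ?_⟩
      have htv : t = A * B := by linarith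
      simp only [Prod.mk.injEq]
      refine ⟨by rw [hA2, ha', mul_comm], by rw [hB2, hb', mul_comm], ?_⟩
      rw [ht, htv]; ring
    · refine ⟨⟨A, -B, d⟩, ⟨hApos, hdpos, (neg_ne_zero.mpr hBpos.ne'), by
        simpa [Int.gcd, Int.natAbs_neg] using hgAB⟩, ?_⟩
      have htv : t = -(A * B) := by linarith
      simp only [Prod.mk.injEq]
      refine ⟨by rw [hA2, ha', mul_comm], by rw [neg_pow, hB2]; rw [hb']; ring, ?_⟩
      rw [ht, htv]; ring
end

section
/- Let v₀, v₁, v₂, v₃, y₀, y₂, y₃ be positive integers and y₁, y₄ nonzero integers satisfying v₂y₀²y₄ − v₀y₁³y₂² + v₃y₃² = 0. Then the conjunction of the conditions [gcd(y₃, y₀y₂) = 1, gcd(y₄, v₀v₁v₂v₃y₂) = 1, v₀v₂v₃ squarefree, gcd(y₁, v₀v₁v₂v₃y₀) = 1, gcd(y₀, y₂) = 1] holds if and only if the conjunction of the conditions [gcd(y₃, v₀y₀y₂) = 1, gcd(y₄, v₁v₂) = 1, gcd(y₁, v₀v₁v₂v₃y₀) = 1, v₀v₂v₃ squarefree, gcd(v₂v₃y₀,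 y₂) = 1, gcd(v₀v₃, y₀) = 1] holds. -/
private lemma keycop {x y m : ℤ} (hm : (Int.gcd x y : ℤ) ∣ m)
    (hc : IsCoprime ((Int.gcd x y : ℤ)) m) : IsCoprime x y := by
  have hu := hc.isUnit_of_dvd' dvd_rfl hm
  rw [Int.isUnit_iff] at hu
  rw [Int.isCoprime_iff_gcd_eq_one]
  omega

private lemma sqcop {a b c : ℤ} (h : Squarefree (a * b * c)) : IsCoprime a b := by
  have h1 : (Int.gcd a b : ℤ) ∣ a := (Int.gcd_dvd_left _ _)
  have h2 : (Int.gcd a b : ℤ) ∣ b := (Int.gcd_dvd_right _ _)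
  have hu : IsUnit ((Int.gcd a b : ℤ)) :=
    h _ ((mul_dvd_mul h1 h2).trans (dvd_mul_right _ _))
  rw [Int.isUnit_iff] at hu
  rw [Int.isCoprime_iff_gcd_eq_one]
  omega

theorem stmt6 (v₀ v₁ v₂ v₃ y₀ y₂ y₃ : ℤ) (y₁ y₄ : ℤ)
    (hv₀ : 0 < v₀) (hv₁ : 0 < v₁) (hv₂ : 0 < v₂) (hv₃ : 0 < v₃)
    (hy₀ : 0 < y₀) (hy₂ : 0 < y₂) (hy₃ : 0 < y₃) (hy₁ : y₁ ≠ 0) (hy₄ : y₄ ≠ 0)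
    (heq : v₂ * y₀ ^ 2 * y₄ - v₀ * y₁ ^ 3 * y₂ ^ 2 + v₃ * y₃ ^ 2 = 0) :
    (Int.gcd y₃ (y₀ * y₂) = 1 ∧
     Int.gcd y₄ (v₀ * v₁ * v₂ * v₃ * y₂) = 1 ∧
     Squarefree (v₀ * v₂ * v₃) ∧
     Int.gcd y₁ (v₀ * v₁ * v₂ * v₃ * y₀) = 1 ∧
     Int.gcd y₀ y₂ = 1) ↔
    (Int.gcd y₃ (v₀ * y₀ * y₂) = 1 ∧
     Int.gcd y₄ (v₁ * v₂) = 1 ∧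
     Int.gcd y₁ (v₀ * v₁ * v₂ * v₃ * y₀) = 1 ∧
     Squarefree (v₀ * v₂ * v₃) ∧
     Int.gcd (v₂ * v₃ * y₀) y₂ = 1 ∧
     Int.gcd (v₀ * v₃) y₀ = 1) := by
  constructor
  · rintro ⟨h1, h2, h3, h4, h5⟩
    -- atoms
    have c02 : IsCoprime v₀ v₂ := sqcop h3
    have c23 : IsCoprime v₂ v₃ := sqcop (show Squarefree (v₂ * v₃ * v₀) by
      rwa [show v₂ * v₃ * v₀ = v₀ * v₂ * v₃ by ring])
    have c03 : IsCoprime v₀ v₃ := sqcop (show Squarefree (v₀ * v₃ * v₂) by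
      rwa [show v₀ * v₃ * v₂ = v₀ * v₂ * v₃ by ring])
    have h1' := Int.isCoprime_iff_gcd_eq_one.mpr h1
    have c30 : IsCoprime y₃ y₀ := h1'.of_mul_right_left
    have c32 : IsCoprime y₃ y₂ := h1'.of_mul_right_right
    have h2' := Int.isCoprime_iff_gcd_eq_one.mpr h2
    have c4y2 : IsCoprime y₄ y₂ := h2'.of_mul_right_right
    have c4v0 : IsCoprime y₄ v₀ :=
      h2'.of_mul_right_left.of_mul_right_left.of_mul_right_left.of_mul_right_left
    have c4v3 : IsCoprime y₄ v₃ := h2'.of_mul_right_left.of_mul_right_right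
    have h4' := Int.isCoprime_iff_gcd_eq_one.mpr h4
    have c1y0 : IsCoprime y₁ y₀ := h4'.of_mul_right_right
    have c1v3 : IsCoprime y₁ v₃ := h4'.of_mul_right_left.of_mul_right_right
    have c1v0 : IsCoprime y₁ v₀ :=
      h4'.of_mul_right_left.of_mul_right_left.of_mul_right_left.of_mul_right_left
    have h5' := Int.isCoprime_iff_gcd_eq_one.mpr h5
    -- new fact 1: IsCoprime y₃ v₀
    have n1 : IsCoprime y₃ v₀ := by
      apply keycop (m := v₂ * y₀ ^ 2 * y₄)
      · have e : v₂ * y₀ ^ 2 * y₄ = v₀ * (y₁ ^ 3 * y₂ ^ 2) - y₃ * (v₃ * y₃) := by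
          first | linear_combination heq | linear_combination -heq
        rw [e]
        exact dvd_sub ((Int.gcd_dvd_right _ _).mul_right _) ((Int.gcd_dvd_left _ _).mul_right _)
      · exact ((c02.of_isCoprime_of_dvd_left (Int.gcd_dvd_right _ _)).mul_right
          ((c30.of_isCoprime_of_dvd_left (Int.gcd_dvd_left _ _)).pow_right)).mul_right
          (c4v0.symm.of_isCoprime_of_dvd_left (Int.gcd_dvd_right _ _))
    -- new fact 2: IsCoprime v₂ y₂
    have n2 : IsCoprime v₂ y₂ := by
      apply keycop (m := v₃ * y₃ ^ 2)
      · have e : v₃ * y₃ ^ 2 = y₂ * (v₀ * y₁ ^ 3 * y₂) - v₂ * (y₀ ^ 2 * y₄) := by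
          first | linear_combination heq | linear_combination -heq
        rw [e]
        exact dvd_sub ((Int.gcd_dvd_right _ _).mul_right _) ((Int.gcd_dvd_left _ _).mul_right _)
      · exact (c23.of_isCoprime_of_dvd_left (Int.gcd_dvd_left _ _)).mul_right
          ((c32.symm.of_isCoprime_of_dvd_left (Int.gcd_dvd_right _ _)).pow_right)
    -- new fact 3: IsCoprime v₃ y₂
    have n3 : IsCoprime v₃ y₂ := by
      apply keycop (m := v₂ * y₀ ^ 2 * y₄)
      · have e : v₂ * y₀ ^ 2 * y₄ = y₂ * (v₀ * y₁ ^ 3 * y₂) - v₃ * y₃ ^ 2 := by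
          first | linear_combination heq | linear_combination -heq
        rw [e]
        exact dvd_sub ((Int.gcd_dvd_right _ _).mul_right _) ((Int.gcd_dvd_left _ _).mul_right _)
      · exact ((c23.symm.of_isCoprime_of_dvd_left (Int.gcd_dvd_left _ _)).mul_right
          ((h5'.symm.of_isCoprime_of_dvd_left (Int.gcd_dvd_right _ _)).pow_right)).mul_right
          (c4v3.symm.of_isCoprime_of_dvd_left (Int.gcd_dvd_left _ _))
    -- new fact 4: IsCoprime v₀ y₀
    have n4 : IsCoprime v₀ y₀ := by
      apply keycop (m := v₃ * y₃ ^ 2)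
      · have e : v₃ * y₃ ^ 2 = v₀ * (y₁ ^ 3 * y₂ ^ 2) - y₀ * (v₂ * y₀ * y₄) := by
          first | linear_combination heq | linear_combination -heq
        rw [e]
        exact dvd_sub ((Int.gcd_dvd_left _ _).mul_right _) ((Int.gcd_dvd_right _ _).mul_right _)
      · exact (c03.of_isCoprime_of_dvd_left (Int.gcd_dvd_left _ _)).mul_right
          ((c30.symm.of_isCoprime_of_dvd_left (Int.gcd_dvd_right _ _)).pow_right)
    -- new fact 5: IsCoprime v₃ y₀
    have n5 : IsCoprime v₃ y₀ := by
      apply keycop (m := v₀ * y₁ ^ 3 * y₂ ^ 2)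
      · have e : v₀ * y₁ ^ 3 * y₂ ^ 2 = y₀ * (v₂ * y₀ * y₄) + v₃ * y₃ ^ 2 := by
          first | linear_combination heq | linear_combination -heq
        rw [e]
        exact dvd_add ((Int.gcd_dvd_right _ _).mul_right _) ((Int.gcd_dvd_left _ _).mul_right _)
      · exact (((c03.symm.of_isCoprime_of_dvd_left (Int.gcd_dvd_left _ _)).mul_right
          ((c1v3.symm.of_isCoprime_of_dvd_left (Int.gcd_dvd_left _ _)).pow_right)).mul_right
          ((h5'.of_isCoprime_of_dvd_left (Int.gcd_dvd_right _ _)).pow_right))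
    refine ⟨?_, ?_, h4, h3, ?_, ?_⟩
    · rw [← Int.isCoprime_iff_gcd_eq_one]
      exact (n1.mul_right c30).mul_right c32
    · rw [← Int.isCoprime_iff_gcd_eq_one]
      exact (h2'.of_mul_right_left.of_mul_right_left.of_mul_right_left.of_mul_right_right).mul_right
        (h2'.of_mul_right_left.of_mul_right_left.of_mul_right_right)
    · rw [← Int.isCoprime_iff_gcd_eq_one]
      exact (n2.mul_left n3).mul_left h5'
    · rw [← Int.isCoprime_iff_gcd_eq_one]
      exact n4.mul_left n5
  · rintro ⟨h1, h2, h3, h4, h5, h6⟩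
    -- atoms
    have c02 : IsCoprime v₀ v₂ := sqcop h4
    have c23 : IsCoprime v₂ v₃ := sqcop (show Squarefree (v₂ * v₃ * v₀) by
      rwa [show v₂ * v₃ * v₀ = v₀ * v₂ * v₃ by ring])
    have c03 : IsCoprime v₀ v₃ := sqcop (show Squarefree (v₀ * v₃ * v₂) by
      rwa [show v₀ * v₃ * v₂ = v₀ * v₂ * v₃ by ring])
    have h1' := Int.isCoprime_iff_gcd_eq_one.mpr h1
    have c3v0 : IsCoprime y₃ v₀ := h1'.of_mul_right_left.of_mul_right_left
    have c30 : IsCoprime y₃ y₀ := h1'.of_mul_right_left.of_mul_right_right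
    have c32 : IsCoprime y₃ y₂ := h1'.of_mul_right_right
    have h2' := Int.isCoprime_iff_gcd_eq_one.mpr h2
    have c4v1 : IsCoprime y₄ v₁ := h2'.of_mul_right_left
    have c4v2 : IsCoprime y₄ v₂ := h2'.of_mul_right_right
    have h3' := Int.isCoprime_iff_gcd_eq_one.mpr h3
    have c1v0 : IsCoprime y₁ v₀ :=
      h3'.of_mul_right_left.of_mul_right_left.of_mul_right_left.of_mul_right_left
    have c1v3 : IsCoprime y₁ v₃ := h3'.of_mul_right_left.of_mul_right_right
    have h5' := Int.isCoprime_iff_gcd_eq_one.mpr h5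
    have cv2y2 : IsCoprime v₂ y₂ := h5'.of_isCoprime_of_dvd_left
      (dvd_mul_of_dvd_left (dvd_mul_right _ _) _)
    have cv3y2 : IsCoprime v₃ y₂ := h5'.of_isCoprime_of_dvd_left
      (dvd_mul_of_dvd_left (dvd_mul_left _ _) _)
    have cy0y2 : IsCoprime y₀ y₂ := h5'.of_isCoprime_of_dvd_left (dvd_mul_left _ _)
    have h6' := Int.isCoprime_iff_gcd_eq_one.mpr h6
    have cv0y0 : IsCoprime v₀ y₀ := h6'.of_isCoprime_of_dvd_left (dvd_mul_right _ _)
    have cv3y0 : IsCoprime v₃ y₀ := h6'.of_isCoprime_of_dvd_left (dvd_mul_left _ _)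
    -- new fact 6: IsCoprime y₄ v₀
    have n6 : IsCoprime y₄ v₀ := by
      apply keycop (m := v₃ * y₃ ^ 2)
      · have e : v₃ * y₃ ^ 2 = v₀ * (y₁ ^ 3 * y₂ ^ 2) - y₄ * (v₂ * y₀ ^ 2) := by
          first | linear_combination heq | linear_combination -heq
        rw [e]
        exact dvd_sub ((Int.gcd_dvd_right _ _).mul_right _) ((Int.gcd_dvd_left _ _).mul_right _)
      · exact (c03.of_isCoprime_of_dvd_left (Int.gcd_dvd_right _ _)).mul_right
          ((c3v0.symm.of_isCoprime_of_dvd_left (Int.gcd_dvd_right _ _)).pow_right)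
    -- new fact 7: IsCoprime y₄ v₃
    have n7 : IsCoprime y₄ v₃ := by
      apply keycop (m := v₀ * y₁ ^ 3 * y₂ ^ 2)
      · have e : v₀ * y₁ ^ 3 * y₂ ^ 2 = y₄ * (v₂ * y₀ ^ 2) + v₃ * y₃ ^ 2 := by
          first | linear_combination heq | linear_combination -heq
        rw [e]
        exact dvd_add ((Int.gcd_dvd_left _ _).mul_right _) ((Int.gcd_dvd_right _ _).mul_right _)
      · exact ((c03.symm.of_isCoprime_of_dvd_left (Int.gcd_dvd_right _ _)).mul_right
          ((c1v3.symm.of_isCoprime_of_dvd_left (Int.gcd_dvd_right _ _)).pow_right)).mul_right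
          ((cv3y2.of_isCoprime_of_dvd_left (Int.gcd_dvd_right _ _)).pow_right)
    -- new fact 8: IsCoprime y₄ y₂
    have n8 : IsCoprime y₄ y₂ := by
      apply keycop (m := v₃ * y₃ ^ 2)
      · have e : v₃ * y₃ ^ 2 = y₂ * (v₀ * y₁ ^ 3 * y₂) - y₄ * (v₂ * y₀ ^ 2) := by
          first | linear_combination heq | linear_combination -heq
        rw [e]
        exact dvd_sub ((Int.gcd_dvd_right _ _).mul_right _) ((Int.gcd_dvd_left _ _).mul_right _)
      · exact (cv3y2.symm.of_isCoprime_of_dvd_left (Int.gcd_dvd_right _ _)).mul_right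
          ((c32.symm.of_isCoprime_of_dvd_left (Int.gcd_dvd_right _ _)).pow_right)
    refine ⟨?_, ?_, h4, h3, ?_⟩
    · rw [← Int.isCoprime_iff_gcd_eq_one]
      exact c30.mul_right c32
    · rw [← Int.isCoprime_iff_gcd_eq_one]
      exact ((((n6.mul_right c4v1).mul_right c4v2).mul_right n7).mul_right n8)
    · rw [← Int.isCoprime_iff_gcd_eq_one]
      exact cy0y2
end

section
/- There is an absolute constant C > 0 with the following property. Let κ ∈ [0,1], let ϑ : ℕ → ℝ be an arithmetic function such that Σ_{d=1}^∞ |(ϑ∗μ)(d)|/d^κ < ∞, and let a, q ∈ ℤ with q > 0 and gcd(a, q) = 1. Then for every real t ≥ 1, | Σ_{n ≤ t, n ≡ a (mod q)} ϑ(n) − (t/q)·Σ_{d ≥ 1, gcd(d,q)=1} (ϑ∗μ)(d)/d | ≤ C · t^κ · Σ_{d=1}^∞ |(ϑ∗μ)(d)|/d^κ. -/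
open scoped BigOperators ArithmeticFunction

noncomputable section

/-- The Dirichlet convolution `(ϑ ∗ μ)(d) = Σ_{e ∣ d} ϑ(e) μ(d/e)`. -/
def convMu (ϑ : ℕ → ℝ) (d : ℕ) : ℝ :=
  ∑ e ∈ d.divisors, ϑ e * (ArithmeticFunction.moebius (d / e) : ℝ)

namespace Stmt7Aux

open Finset

lemma convMu_zero (ϑ : ℕ → ℝ) : convMu ϑ 0 = 0 := by simp [convMu]

lemma sum_divisors_convMu (ϑ : ℕ → ℝ) : ∀ n > 0, ∑ d ∈ n.divisors, convMu ϑ d = ϑ n := by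
  rw [ArithmeticFunction.sum_eq_iff_sum_smul_moebius_eq]
  intro n hn
  simp only [zsmul_eq_mul]
  rw [Nat.sum_divisorsAntidiagonal' (f := fun a b => ((ArithmeticFunction.moebius a : ℤ) : ℝ) * ϑ b)]
  simp [convMu, mul_comm]

lemma card_cast_eq (m v : ℤ) (N : ℕ) :
    ((Finset.Icc 1 N).filter (fun n : ℕ => (n : ℤ) ≡ v [ZMOD m])).card
      = ((Finset.Ioc (0:ℤ) (N:ℤ)).filter (fun x => x ≡ v [ZMOD m])).card := by
  apply Finset.card_nbij' (fun n : ℕ => (n : ℤ)) (fun x : ℤ => x.toNat)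
  · intro n hn
    simp only [mem_coe, mem_filter, mem_Icc] at hn
    simp only [mem_coe, mem_filter, mem_Ioc]
    exact ⟨⟨by exact_mod_cast hn.1.1, by exact_mod_cast hn.1.2⟩, hn.2⟩
  · intro x hx
    simp only [mem_coe, mem_filter, mem_Ioc] at hx
    simp only [mem_coe, mem_filter, mem_Icc]
    refine ⟨⟨by omega, by omega⟩, ?_⟩
    rw [Int.toNat_of_nonneg (by omega)]
    exact hx.2
  · intro n _; simp
  · intro x hx
    simp only [mem_coe, mem_filter, mem_Ioc] at hx
    exact Int.toNat_of_nonneg (by omega)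

lemma count_bound (m v : ℤ) (hm : 0 < m) (N : ℕ) :
    |((((Finset.Icc 1 N).filter (fun n : ℕ => (n : ℤ) ≡ v [ZMOD m])).card : ℝ)) - (N : ℝ) / (m : ℝ)| ≤ 1 := by
  have hfor := Int.Ioc_filter_modEq_card (0:ℤ) (N:ℤ) hm v
  rw [← card_cast_eq m v N] at hfor
  set c : ℕ := ((Finset.Icc 1 N).filter (fun n : ℕ => (n : ℤ) ≡ v [ZMOD m])).card with hc
  set A := ⌊(((N:ℤ) : ℚ) - (v:ℚ)) / (m : ℚ)⌋ with hA
  set B := ⌊(((0:ℤ) : ℚ) - (v:ℚ)) / (m : ℚ)⌋ with hB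
  have hmq : (0:ℚ) < (m:ℚ) := by exact_mod_cast hm
  have hBA : B ≤ A := by
    apply Int.floor_mono
    gcongr
    linarith [Nat.cast_nonneg (α := ℚ) N]
  have hcAB : (c : ℤ) = A - B := by rw [hfor]; omega
  have hA1 : (A : ℚ) ≤ (((N:ℤ) : ℚ) - (v:ℚ)) / (m : ℚ) := Int.floor_le _
  have hA2 : (((N:ℤ) : ℚ) - (v:ℚ)) / (m : ℚ) < A + 1 := Int.lt_floor_add_one _
  have hB1 : (B : ℚ) ≤ (((0:ℤ) : ℚ) - (v:ℚ)) / (m : ℚ) := Int.floor_le _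
  have hB2 : (((0:ℤ) : ℚ) - (v:ℚ)) / (m : ℚ) < B + 1 := Int.lt_floor_add_one _
  have key : |((c : ℚ)) - (N : ℚ) / (m : ℚ)| ≤ 1 := by
    have hNd : ((N : ℚ)) / (m : ℚ) = (((N:ℤ) : ℚ) - (v:ℚ)) / (m : ℚ) - (((0:ℤ) : ℚ) - (v:ℚ)) / (m : ℚ) := by
      push_cast
      field_simp
      ring
    rw [abs_le]
    have hcq : (c : ℚ) = (A : ℚ) - (B : ℚ) := by exact_mod_cast hcAB
    constructor <;> rw [hcq, hNd] <;> linarith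
  have := abs_le.mp key
  rw [abs_le]
  constructor <;> [exact_mod_cast this.1; exact_mod_cast this.2]

lemma crt_equiv (d : ℕ) (a q : ℤ) (hdq : Int.gcd (d : ℤ) q = 1) :
    ∃ v : ℤ, ∀ n : ℕ, ((d ∣ n ∧ (n : ℤ) ≡ a [ZMOD q]) ↔ (n : ℤ) ≡ v [ZMOD (d : ℤ) * q]) := by
  have hco : IsCoprime (d : ℤ) q := Int.isCoprime_iff_gcd_eq_one.mpr hdq
  obtain ⟨u, w, huw⟩ := id hco
  refine ⟨a * u * d, fun n => ?_⟩
  constructor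
  · rintro ⟨hdn, hmod⟩
    rw [Int.modEq_iff_dvd]
    apply IsCoprime.mul_dvd hco
    · exact dvd_sub (Dvd.dvd.mul_left dvd_rfl (a * u)) (by exact_mod_cast hdn)
    · have h1 : q ∣ a - (n : ℤ) := Int.ModEq.dvd hmod
      have : a * u * (d : ℤ) - n = (a - n) - a * w * q + (a * w * q - a * (1 - u * d)) := by ring
      rw [this]
      apply dvd_add
      · exact dvd_sub h1 (Dvd.dvd.mul_left dvd_rfl (a * w))
      · have : a * w * q - a * (1 - u * (d : ℤ)) = a * w * q - a * (w * q) := by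
          rw [show (1 : ℤ) - u * d = w * q by linarith [huw]]
        rw [this]
        exact ⟨0, by ring⟩
  · intro hmod
    have hdvd : ((d : ℤ) * q) ∣ (a * u * d - n) := (Int.modEq_iff_dvd.mp hmod)
    constructor
    · have hd1 : (d : ℤ) ∣ (a * u * d - n) := dvd_trans (dvd_mul_right _ _) hdvd
      have hd2 : (d : ℤ) ∣ (a * u * (d : ℤ)) := Dvd.dvd.mul_left dvd_rfl (a * u)
      have : (d : ℤ) ∣ (n : ℤ) := by
        have := dvd_sub hd2 hd1
        simpa using this
      exact_mod_cast this
    · have hq1 : q ∣ (a * u * d - n) := dvd_trans (dvd_mul_left _ _) hdvd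
      rw [Int.modEq_iff_dvd]
      have : a - (n : ℤ) = (a * u * d - n) + a * w * q := by
        have h1 : u * (d:ℤ) = 1 - w * q := by linarith [huw]
        calc a - (n : ℤ) = a * (u * d) - n + a * (w * q) := by rw [h1]; ring
        _ = (a * u * d - n) + a * w * q := by ring
      rw [this]
      exact dvd_add hq1 ⟨a * w, by ring⟩

lemma count_vanish (d : ℕ) (a q : ℤ) (haq : Int.gcd a q = 1) (hdq : Int.gcd (d : ℤ) q ≠ 1) (N : ℕ) :
    ((Finset.Icc 1 N).filter (fun n : ℕ => d ∣ n ∧ (n : ℤ) ≡ a [ZMOD q])) = ∅ := by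
  rw [Finset.filter_eq_empty_iff]
  rintro n hn ⟨hdn, hmod⟩
  apply hdq
  set g : ℕ := Int.gcd (d : ℤ) q with hg
  have hgd : (g : ℤ) ∣ (d : ℤ) := Int.gcd_dvd_left _ _
  have hgq : (g : ℤ) ∣ q := Int.gcd_dvd_right _ _
  have hgn : (g : ℤ) ∣ (n : ℤ) := dvd_trans hgd (by exact_mod_cast hdn)
  have hqan : q ∣ (a - (n : ℤ)) := Int.ModEq.dvd hmod
  have hga : (g : ℤ) ∣ a := by
    have : (g : ℤ) ∣ (a - n) := dvd_trans hgq hqan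
    have := dvd_add this hgn
    simpa using this
  have : (g : ℤ) ∣ (Int.gcd a q : ℤ) := Int.dvd_coe_gcd hga hgq
  rw [haq] at this
  have : g ∣ 1 := by exact_mod_cast this
  simpa [hg] using Nat.eq_one_of_dvd_one this

lemma sum_rearrange (ϑ : ℕ → ℝ) (a q : ℤ) (N : ℕ) :
    ∑ n ∈ Finset.Icc 1 N, (if (n : ℤ) ≡ a [ZMOD q] then ϑ n else 0)
      = ∑ d ∈ Finset.range (N + 1), convMu ϑ d *
          (((Finset.Icc 1 N).filter (fun n : ℕ => d ∣ n ∧ (n : ℤ) ≡ a [ZMOD q])).card : ℝ) := by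
  have step1 : ∀ n ∈ Finset.Icc 1 N, (if (n : ℤ) ≡ a [ZMOD q] then ϑ n else 0)
      = ∑ d ∈ Finset.range (N + 1), (if d ∣ n ∧ (n : ℤ) ≡ a [ZMOD q] then convMu ϑ d else 0) := by
    intro n hn
    rw [Finset.mem_Icc] at hn
    by_cases hc : (n : ℤ) ≡ a [ZMOD q]
    · simp only [hc, if_true, and_true]
      rw [← sum_divisors_convMu ϑ n (by omega), ← Finset.sum_filter]
      congr 1
      ext d
      simp only [Finset.mem_filter, Finset.mem_range, Nat.mem_divisors, Nat.lt_succ_iff]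
      constructor
      · rintro ⟨hd, -⟩
        exact ⟨le_trans (Nat.le_of_dvd (by omega) hd) hn.2, hd⟩
      · rintro ⟨-, hd⟩; exact ⟨hd, by omega⟩
    · simp [hc]
  rw [Finset.sum_congr rfl step1, Finset.sum_comm]
  apply Finset.sum_congr rfl
  intro d _
  rw [← Finset.sum_filter, Finset.sum_const, nsmul_eq_mul, mul_comm]


lemma abs_f_le (ϑ : ℕ → ℝ) (q : ℤ) (d : ℕ) (hd : 0 < d) :
    |if Int.gcd (d : ℤ) q = 1 then convMu ϑ d / (d : ℝ) else 0| ≤ |convMu ϑ d| / (d : ℝ) := by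
  have hd0 : (0:ℝ) < (d:ℝ) := by exact_mod_cast hd
  by_cases hc : Int.gcd (d:ℤ) q = 1
  · rw [if_pos hc, abs_div, abs_of_nonneg hd0.le]
  · rw [if_neg hc, abs_zero]
    positivity

lemma abs_f_le_h (ϑ : ℕ → ℝ) (κ : ℝ) (hκ0 : 0 ≤ κ) (hκ1 : κ ≤ 1) (q : ℤ) (d : ℕ) :
    |if Int.gcd (d : ℤ) q = 1 then convMu ϑ d / (d : ℝ) else 0| ≤ |convMu ϑ d| / (d : ℝ) ^ κ := by
  rcases Nat.eq_zero_or_pos d with rfl | hd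
  · have : (if Int.gcd ((0:ℕ) : ℤ) q = 1 then convMu ϑ 0 / ((0:ℕ) : ℝ) else 0) = 0 := by
      rw [convMu_zero]
      split <;> simp
    rw [this, abs_zero]
    positivity
  · refine (abs_f_le ϑ q d hd).trans ?_
    have hd1 : (1:ℝ) ≤ (d:ℝ) := by exact_mod_cast hd
    have hdk : (0:ℝ) < (d:ℝ) ^ κ := Real.rpow_pos_of_pos (by linarith) κ
    have hpow : (d:ℝ) ^ κ ≤ (d:ℝ) := by
      nth_rewrite 2 [← Real.rpow_one (d:ℝ)]
      exact Real.rpow_le_rpow_of_exponent_le hd1 hκ1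
    exact div_le_div_of_nonneg_left (abs_nonneg _) hdk hpow

lemma tail_term_bound (ϑ : ℕ → ℝ) (κ : ℝ) (hκ0 : 0 ≤ κ) (hκ1 : κ ≤ 1) (q : ℤ)
    (hq1 : (1:ℝ) ≤ (q:ℝ)) (t : ℝ) (ht0 : 0 < t) (d : ℕ) (hd : 0 < d) (htd : t ≤ (d:ℝ)) :
    (t / (q:ℝ)) * |if Int.gcd (d : ℤ) q = 1 then convMu ϑ d / (d : ℝ) else 0|
      ≤ t ^ κ * (|convMu ϑ d| / (d : ℝ) ^ κ) := by
  have hd0 : (0:ℝ) < (d:ℝ) := by exact_mod_cast hd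
  have hdk : (0:ℝ) < (d:ℝ) ^ κ := Real.rpow_pos_of_pos hd0 κ
  have step1 : (t/(q:ℝ)) * |if Int.gcd (d : ℤ) q = 1 then convMu ϑ d / (d : ℝ) else 0|
      ≤ t * (|convMu ϑ d| / (d:ℝ)) :=
    mul_le_mul (div_le_self ht0.le hq1) (abs_f_le ϑ q d hd) (abs_nonneg _) ht0.le
  refine step1.trans ?_
  have hκ' : (0:ℝ) ≤ 1 - κ := by linarith
  have h1κ : t^(1-κ) ≤ (d:ℝ)^(1-κ) := Real.rpow_le_rpow ht0.le htd hκ'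
  have et : t^κ * t^(1-κ) = t := by rw [← Real.rpow_add ht0]; norm_num
  have ed : (d:ℝ)^κ * (d:ℝ)^(1-κ) = (d:ℝ) := by rw [← Real.rpow_add hd0]; norm_num
  have tkey : t * (d:ℝ)^κ ≤ t^κ * (d:ℝ) := by
    calc t * (d:ℝ)^κ = (t^κ * t^(1-κ)) * (d:ℝ)^κ := by rw [et]
      _ ≤ (t^κ * (d:ℝ)^(1-κ)) * (d:ℝ)^κ :=
          mul_le_mul_of_nonneg_right
            (mul_le_mul_of_nonneg_left h1κ (Real.rpow_nonneg ht0.le κ))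
            (Real.rpow_nonneg hd0.le κ)
      _ = t^κ * (d:ℝ) := by rw [mul_assoc, mul_comm ((d:ℝ)^(1-κ)) _, ed]
  have e3 : t * (|convMu ϑ d| / (d:ℝ)) = (t * |convMu ϑ d|) / (d:ℝ) := by ring
  have e4 : t^κ * (|convMu ϑ d| / (d : ℝ) ^ κ) = (t^κ * |convMu ϑ d|) / ((d:ℝ)^κ) := by ring
  rw [e3, e4, div_le_div_iff₀ hd0 hdk]
  nlinarith [abs_nonneg (convMu ϑ d)]

lemma per_term_bound (ϑ : ℕ → ℝ) (κ : ℝ) (hκ0 : 0 ≤ κ) (hκ1 : κ ≤ 1) (a q : ℤ)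
    (hq : 0 < q) (hgcd : Int.gcd a q = 1) (t : ℝ) (ht : 1 ≤ t) (N : ℕ)
    (hNt : (N:ℝ) ≤ t) (htN1 : t < (N:ℝ) + 1) (d : ℕ) (hdN : d ≤ N) :
    |convMu ϑ d * (((Finset.Icc 1 N).filter
          (fun n : ℕ => d ∣ n ∧ (n : ℤ) ≡ a [ZMOD q])).card : ℝ)
        - (t/(q:ℝ)) * (if Int.gcd (d : ℤ) q = 1 then convMu ϑ d / (d : ℝ) else 0)|
      ≤ 2 * (t ^ κ * (|convMu ϑ d| / (d : ℝ) ^ κ)) := by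
  have ht0 : (0:ℝ) < t := lt_of_lt_of_le one_pos ht
  have hq1 : (1:ℝ) ≤ (q:ℝ) := by exact_mod_cast hq
  have hq0 : (0:ℝ) < (q:ℝ) := lt_of_lt_of_le one_pos hq1
  rcases Nat.eq_zero_or_pos d with rfl | hdpos
  · rw [convMu_zero]
    have h5 : (if Int.gcd ((0:ℕ) : ℤ) q = 1 then (0:ℝ) / ((0:ℕ) : ℝ) else 0) = 0 := by
      split <;> simp
    rw [h5]
    simp only [zero_mul, mul_zero, sub_zero, abs_zero]
    positivity
  · have hd0 : (0:ℝ) < (d:ℝ) := by exact_mod_cast hdpos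
    by_cases hc : Int.gcd (d:ℤ) q = 1
    · obtain ⟨v, hv⟩ := Stmt7Aux.crt_equiv d a q hc
      have hfilt : ((Finset.Icc 1 N).filter (fun n : ℕ => d ∣ n ∧ (n : ℤ) ≡ a [ZMOD q]))
          = ((Finset.Icc 1 N).filter (fun n : ℕ => (n : ℤ) ≡ v [ZMOD (d:ℤ)*q])) := by
        apply Finset.filter_congr
        intro n _
        exact iff_of_eq (propext (hv n))
      have hm : (0:ℤ) < (d:ℤ) * q := mul_pos (by exact_mod_cast hdpos) hq
      have hcb := Stmt7Aux.count_bound ((d:ℤ)*q) v hm N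
      rw [← hfilt] at hcb
      have hmr : (((d:ℤ) * q : ℤ) : ℝ) = (d:ℝ) * (q:ℝ) := by push_cast; ring
      rw [hmr] at hcb
      set c : ℝ := (((Finset.Icc 1 N).filter
        (fun n : ℕ => d ∣ n ∧ (n : ℤ) ≡ a [ZMOD q])).card : ℝ) with hcdef
      have hdq_pos : (0:ℝ) < (d:ℝ) * (q:ℝ) := mul_pos hd0 hq0
      have hdq_ge1 : (1:ℝ) ≤ (d:ℝ) * (q:ℝ) := by
        have : (1:ℝ) ≤ (d:ℝ) := by exact_mod_cast hdpos
        nlinarith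
      have h2 : |c - t / ((q:ℝ) * (d:ℝ))| ≤ 2 := by
        have e1 : t / ((q:ℝ) * (d:ℝ)) = t / ((d:ℝ) * (q:ℝ)) := by rw [mul_comm]
        rw [e1]
        have hb := abs_le.mp hcb
        have hmono : (N:ℝ) / ((d:ℝ)*(q:ℝ)) ≤ t / ((d:ℝ)*(q:ℝ)) := by gcongr
        have hup : t / ((d:ℝ)*(q:ℝ)) ≤ (N:ℝ) / ((d:ℝ)*(q:ℝ)) + 1 := by
          have e2 : t / ((d:ℝ)*(q:ℝ)) - (N:ℝ) / ((d:ℝ)*(q:ℝ)) = (t - N) / ((d:ℝ)*(q:ℝ)) := by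
            ring
          have e3 : (t - (N:ℝ)) / ((d:ℝ)*(q:ℝ)) ≤ (t - (N:ℝ)) :=
            div_le_self (by linarith) hdq_ge1
          linarith [e2 ▸ e3]
        rw [abs_le]
        constructor <;> linarith [hb.1, hb.2]
      have heq : convMu ϑ d * c
            - (t/(q:ℝ)) * (if Int.gcd (d : ℤ) q = 1 then convMu ϑ d / (d : ℝ) else 0)
          = convMu ϑ d * (c - t/((q:ℝ)*(d:ℝ))) := by
        rw [if_pos hc]
        ring
      rw [heq, abs_mul]
      have hdt : (d:ℝ) ≤ t := by
        have : (d:ℝ) ≤ (N:ℝ) := by exact_mod_cast hdN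
        linarith
      have hdk : (0:ℝ) < (d:ℝ)^κ := Real.rpow_pos_of_pos hd0 κ
      have hpow2 : (d:ℝ)^κ ≤ t^κ := Real.rpow_le_rpow hd0.le hdt hκ0
      have hgle : |convMu ϑ d| ≤ t^κ * (|convMu ϑ d| / (d : ℝ) ^ κ) := by
        rw [mul_div_assoc', le_div_iff₀ hdk]
        nlinarith [abs_nonneg (convMu ϑ d)]
      calc |convMu ϑ d| * |c - t/((q:ℝ)*(d:ℝ))|
          ≤ (t^κ * (|convMu ϑ d| / (d : ℝ) ^ κ)) * 2 :=
            mul_le_mul hgle h2 (abs_nonneg _) (by positivity)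
        _ = 2 * (t^κ * (|convMu ϑ d| / (d : ℝ) ^ κ)) := by ring
    · have hzero := Stmt7Aux.count_vanish d a q hgcd hc N
      rw [if_neg hc, hzero]
      simp only [Finset.card_empty, Nat.cast_zero, mul_zero, sub_zero, abs_zero]
      positivity

end Stmt7Aux

set_option maxHeartbeats 2000000 in
theorem stmt7 :
    ∃ C : ℝ, 0 < C ∧
      ∀ κ : ℝ, 0 ≤ κ → κ ≤ 1 → ∀ ϑ : ℕ → ℝ,
        Summable (fun d : ℕ => |convMu ϑ d| / (d : ℝ) ^ κ) →
        ∀ a q : ℤ, 0 < q → Int.gcd a q = 1 → ∀ t : ℝ, 1 ≤ t →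
          |(∑ n ∈ Finset.Icc 1 ⌊t⌋₊, if (n : ℤ) ≡ a [ZMOD q] then ϑ n else 0) -
              (t / (q : ℝ)) *
                ∑' d : ℕ, (if Int.gcd (d : ℤ) q = 1 then convMu ϑ d / (d : ℝ) else 0)|
            ≤ C * t ^ κ * ∑' d : ℕ, |convMu ϑ d| / (d : ℝ) ^ κ := by
  classical
  refine ⟨3, by norm_num, ?_⟩
  intro κ hκ0 hκ1 ϑ hsum a q hq hgcd t ht
  have ht0 : (0:ℝ) < t := lt_of_lt_of_le one_pos ht
  have hN1 : 1 ≤ ⌊t⌋₊ := Nat.le_floor (by exact_mod_cast ht)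
  have hNt : ((⌊t⌋₊ : ℕ) : ℝ) ≤ t := Nat.floor_le ht0.le
  have htN1 : t < ((⌊t⌋₊ : ℕ) : ℝ) + 1 := Nat.lt_floor_add_one t
  have hq1 : (1:ℝ) ≤ (q:ℝ) := by exact_mod_cast hq
  set N := ⌊t⌋₊ with hNdef
  -- summability of f
  have hsumf : Summable (fun d : ℕ => if Int.gcd (d:ℤ) q = 1 then convMu ϑ d / (d:ℝ) else 0) := by
    apply Summable.of_norm_bounded hsum
    intro d
    rw [Real.norm_eq_abs]
    exact Stmt7Aux.abs_f_le_h ϑ κ hκ0 hκ1 q d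
  have h0 : ∀ d : ℕ, 0 ≤ |convMu ϑ d| / (d : ℝ) ^ κ := fun d =>
    div_nonneg (abs_nonneg _) (Real.rpow_nonneg (Nat.cast_nonneg d) κ)
  have hsumh_shift : Summable (fun k => |convMu ϑ (k + (N+1))| / ((k + (N+1) : ℕ) : ℝ) ^ κ) :=
    (summable_nat_add_iff (N+1)).mpr hsum
  have hsumf_shift : Summable (fun k =>
      if Int.gcd ((k + (N+1) : ℕ) : ℤ) q = 1 then convMu ϑ (k + (N+1)) / ((k + (N+1) : ℕ) : ℝ) else 0) :=
    (summable_nat_add_iff (N+1)).mpr hsumf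
  have hsumfa_shift : Summable (fun k =>
      |if Int.gcd ((k + (N+1) : ℕ) : ℤ) q = 1 then convMu ϑ (k + (N+1)) / ((k + (N+1) : ℕ) : ℝ) else 0|) :=
    hsumf_shift.abs
  -- rearrange the main sum
  rw [Stmt7Aux.sum_rearrange ϑ a q N]
  -- split the tsum
  have hsplitf : (∑' d : ℕ, if Int.gcd (d:ℤ) q = 1 then convMu ϑ d / (d:ℝ) else 0)
      = (∑ d ∈ Finset.range (N+1), if Int.gcd (d:ℤ) q = 1 then convMu ϑ d / (d:ℝ) else 0)
        + ∑' k : ℕ, (if Int.gcd ((k + (N+1) : ℕ) : ℤ) q = 1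
            then convMu ϑ (k + (N+1)) / ((k + (N+1) : ℕ) : ℝ) else 0) :=
    (Summable.sum_add_tsum_nat_add (N+1) hsumf).symm
  rw [hsplitf]
  have expand : (∑ d ∈ Finset.range (N+1), convMu ϑ d *
        (((Finset.Icc 1 N).filter (fun n : ℕ => d ∣ n ∧ (n : ℤ) ≡ a [ZMOD q])).card : ℝ))
        - (t/(q:ℝ)) * ((∑ d ∈ Finset.range (N+1),
            if Int.gcd (d:ℤ) q = 1 then convMu ϑ d / (d:ℝ) else 0)
          + ∑' k : ℕ, (if Int.gcd ((k + (N+1) : ℕ) : ℤ) q = 1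
              then convMu ϑ (k + (N+1)) / ((k + (N+1) : ℕ) : ℝ) else 0))
      = (∑ d ∈ Finset.range (N+1), (convMu ϑ d *
          (((Finset.Icc 1 N).filter (fun n : ℕ => d ∣ n ∧ (n : ℤ) ≡ a [ZMOD q])).card : ℝ)
          - (t/(q:ℝ)) * (if Int.gcd (d:ℤ) q = 1 then convMu ϑ d / (d:ℝ) else 0)))
        - (t/(q:ℝ)) * ∑' k : ℕ, (if Int.gcd ((k + (N+1) : ℕ) : ℤ) q = 1
            then convMu ϑ (k + (N+1)) / ((k + (N+1) : ℕ) : ℝ) else 0) := by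
    rw [Finset.sum_sub_distrib, ← Finset.mul_sum]
    ring
  rw [expand]
  have htq : (0:ℝ) ≤ t/(q:ℝ) := by positivity
  have htk : (0:ℝ) ≤ t^κ := Real.rpow_nonneg ht0.le κ
  have hT : (0:ℝ) ≤ ∑' d : ℕ, |convMu ϑ d| / (d : ℝ) ^ κ := tsum_nonneg h0
  have tri : ∀ x y : ℝ, |x - y| ≤ |x| + |y| := fun x y => by
    calc |x - y| = |x + (-y)| := by ring_nf
    _ ≤ |x| + |(-y)| := abs_add_le _ _
    _ = |x| + |y| := by rw [abs_neg]
  have bound1 : |∑ d ∈ Finset.range (N+1), (convMu ϑ d *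
        (((Finset.Icc 1 N).filter (fun n : ℕ => d ∣ n ∧ (n : ℤ) ≡ a [ZMOD q])).card : ℝ)
        - (t/(q:ℝ)) * (if Int.gcd (d:ℤ) q = 1 then convMu ϑ d / (d:ℝ) else 0))|
      ≤ 2 * t^κ * ∑' d : ℕ, |convMu ϑ d| / (d : ℝ) ^ κ := by
    calc |∑ d ∈ Finset.range (N+1), (convMu ϑ d *
          (((Finset.Icc 1 N).filter (fun n : ℕ => d ∣ n ∧ (n : ℤ) ≡ a [ZMOD q])).card : ℝ)
          - (t/(q:ℝ)) * (if Int.gcd (d:ℤ) q = 1 then convMu ϑ d / (d:ℝ) else 0))|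
        ≤ ∑ d ∈ Finset.range (N+1), |convMu ϑ d *
          (((Finset.Icc 1 N).filter (fun n : ℕ => d ∣ n ∧ (n : ℤ) ≡ a [ZMOD q])).card : ℝ)
          - (t/(q:ℝ)) * (if Int.gcd (d:ℤ) q = 1 then convMu ϑ d / (d:ℝ) else 0)| :=
          Finset.abs_sum_le_sum_abs _ _
      _ ≤ ∑ d ∈ Finset.range (N+1), 2 * (t^κ * (|convMu ϑ d| / (d : ℝ) ^ κ)) := by
          apply Finset.sum_le_sum
          intro d hd
          exact Stmt7Aux.per_term_bound ϑ κ hκ0 hκ1 a q hq hgcd t ht N hNt htN1 d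
            (Nat.lt_succ_iff.mp (Finset.mem_range.mp hd))
      _ = 2 * t^κ * ∑ d ∈ Finset.range (N+1), |convMu ϑ d| / (d : ℝ) ^ κ := by
          rw [Finset.mul_sum]
          exact Finset.sum_congr rfl (fun d _ => by ring)
      _ ≤ 2 * t^κ * ∑' d : ℕ, |convMu ϑ d| / (d : ℝ) ^ κ := by
          apply mul_le_mul_of_nonneg_left (Summable.sum_le_tsum _ (fun i _ => h0 i) hsum)
          positivity
  have bound2 : |(t/(q:ℝ)) * ∑' k : ℕ, (if Int.gcd ((k + (N+1) : ℕ) : ℤ) q = 1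
        then convMu ϑ (k + (N+1)) / ((k + (N+1) : ℕ) : ℝ) else 0)|
      ≤ t^κ * ∑' d : ℕ, |convMu ϑ d| / (d : ℝ) ^ κ := by
    rw [abs_mul, abs_of_nonneg htq]
    have s1 : |∑' k : ℕ, (if Int.gcd ((k + (N+1) : ℕ) : ℤ) q = 1
          then convMu ϑ (k + (N+1)) / ((k + (N+1) : ℕ) : ℝ) else 0)|
        ≤ ∑' k : ℕ, |if Int.gcd ((k + (N+1) : ℕ) : ℤ) q = 1
            then convMu ϑ (k + (N+1)) / ((k + (N+1) : ℕ) : ℝ) else 0| := by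
      have hnorm := norm_tsum_le_tsum_norm (f := fun k : ℕ => (if Int.gcd ((k + (N+1) : ℕ) : ℤ) q = 1
          then convMu ϑ (k + (N+1)) / ((k + (N+1) : ℕ) : ℝ) else 0))
        (by simpa only [Real.norm_eq_abs] using hsumfa_shift)
      simpa only [Real.norm_eq_abs] using hnorm
    have htp : ∀ k : ℕ, (t/(q:ℝ)) * |if Int.gcd ((k + (N+1) : ℕ) : ℤ) q = 1
          then convMu ϑ (k + (N+1)) / ((k + (N+1) : ℕ) : ℝ) else 0|
        ≤ t^κ * (|convMu ϑ (k + (N+1))| / ((k + (N+1) : ℕ) : ℝ) ^ κ) := by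
      intro k
      apply Stmt7Aux.tail_term_bound ϑ κ hκ0 hκ1 q hq1 t ht0 (k + (N+1)) (by omega)
      have : ((N:ℝ) + 1) ≤ ((k + (N+1) : ℕ) : ℝ) := by
        push_cast
        linarith [Nat.cast_nonneg (α := ℝ) k]
      linarith
    have s2 : (t/(q:ℝ)) * ∑' k : ℕ, |if Int.gcd ((k + (N+1) : ℕ) : ℤ) q = 1
          then convMu ϑ (k + (N+1)) / ((k + (N+1) : ℕ) : ℝ) else 0|
        ≤ t^κ * ∑' k : ℕ, |convMu ϑ (k + (N+1))| / ((k + (N+1) : ℕ) : ℝ) ^ κ := by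
      rw [← tsum_mul_left, ← tsum_mul_left]
      exact Summable.tsum_le_tsum htp (hsumfa_shift.mul_left _) (hsumh_shift.mul_left _)
    have s3 : (∑' k : ℕ, |convMu ϑ (k + (N+1))| / ((k + (N+1) : ℕ) : ℝ) ^ κ)
        ≤ ∑' d : ℕ, |convMu ϑ d| / (d : ℝ) ^ κ := by
      have hsplit := Summable.sum_add_tsum_nat_add (N+1) hsum
      have hpart : (0:ℝ) ≤ ∑ d ∈ Finset.range (N+1), |convMu ϑ d| / (d : ℝ) ^ κ :=
        Finset.sum_nonneg (fun i _ => h0 i)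
      linarith
    calc (t/(q:ℝ)) * |∑' k : ℕ, (if Int.gcd ((k + (N+1) : ℕ) : ℤ) q = 1
            then convMu ϑ (k + (N+1)) / ((k + (N+1) : ℕ) : ℝ) else 0)|
        ≤ (t/(q:ℝ)) * ∑' k : ℕ, |if Int.gcd ((k + (N+1) : ℕ) : ℤ) q = 1
            then convMu ϑ (k + (N+1)) / ((k + (N+1) : ℕ) : ℝ) else 0| :=
          mul_le_mul_of_nonneg_left s1 htq
      _ ≤ t^κ * ∑' k : ℕ, |convMu ϑ (k + (N+1))| / ((k + (N+1) : ℕ) : ℝ) ^ κ := s2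
      _ ≤ t^κ * ∑' d : ℕ, |convMu ϑ d| / (d : ℝ) ^ κ := mul_le_mul_of_nonneg_left s3 htk
  refine (tri _ _).trans ?_
  have := add_le_add bound1 bound2
  refine this.trans ?_
  nlinarith

end
end

section
/- For every ε ∈ (0, 1/6) there is a constant C_ε > 0 such that for every prime p and every complex s with Re(s) ≥ −1/6 + ε one has | F_p(s + 1/6) / ( E_{1,p}(s+1)·E_{2,p}(s+1) ) − 1 | ≤ C_ε · p^{−1−ε}, where F_p(s + 1/6) = 1 + (1−1/p)/(p^{2s+1}−1) + (1−1/p)/(p^{4s+1}−1) + ((1−1/p)²/(p^{6s+1}−1))·( p^{2s+1}/(p^{2s+1}−1) + 1/(p^{4s+1}−1) ) + p^{4s+1}(1−1/p)²/((p^{2s+1}−1)(p^{6s+1}−1)) + p^{5s+1}(1−1/p)²/((p^{4s+1}−1)(p^{6s+1}−1)) + p^{3s}(1−1/p)/(p^{6s+1}−1). -/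
noncomputable section

/-- The local factor `F_p(s + 1/6)` (explicit expression \eqref{saw}). -/
def FpExpr (p : ℕ) (s : ℂ) : ℂ :=
  1 + (1 - 1/(p:ℂ)) / ((p:ℂ) ^ (2*s+1) - 1) + (1 - 1/(p:ℂ)) / ((p:ℂ) ^ (4*s+1) - 1)
    + ((1 - 1/(p:ℂ)) ^ 2 / ((p:ℂ) ^ (6*s+1) - 1)) *
        ((p:ℂ) ^ (2*s+1) / ((p:ℂ) ^ (2*s+1) - 1) + 1 / ((p:ℂ) ^ (4*s+1) - 1))
    + (p:ℂ) ^ (4*s+1) * (1 - 1/(p:ℂ)) ^ 2 /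
        (((p:ℂ) ^ (2*s+1) - 1) * ((p:ℂ) ^ (6*s+1) - 1))
    + (p:ℂ) ^ (5*s+1) * (1 - 1/(p:ℂ)) ^ 2 /
        (((p:ℂ) ^ (4*s+1) - 1) * ((p:ℂ) ^ (6*s+1) - 1))
    + (p:ℂ) ^ (3*s) * (1 - 1/(p:ℂ)) / ((p:ℂ) ^ (6*s+1) - 1)

/-- The local Euler factor `E_{1,p}(s+1)`. -/
def E1p (p : ℕ) (s : ℂ) : ℂ :=
  (1 - (p:ℂ) ^ (-(6*s+1)))⁻¹ * (1 - (p:ℂ) ^ (-(5*s+1)))⁻¹ *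
    ((1 - (p:ℂ) ^ (-(4*s+1)))⁻¹) ^ 2 * (1 - (p:ℂ) ^ (-(3*s+1)))⁻¹ *
    (1 - (p:ℂ) ^ (-(2*s+1)))⁻¹

/-- The local Euler factor `E_{2,p}(s+1)`. -/
def E2p (p : ℕ) (s : ℂ) : ℂ :=
  (1 - (p:ℂ) ^ (-(14*s+3)))⁻¹ * ((1 - (p:ℂ) ^ (-(13*s+3)))⁻¹) ^ 3 *
    (1 - (p:ℂ) ^ (-(10*s+2))) * (1 - (p:ℂ) ^ (-(9*s+2))) *
    (1 - (p:ℂ) ^ (-(8*s+2))) ^ 3 * (1 - (p:ℂ) ^ (-(7*s+2))) ^ 3 *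
    (1 - (p:ℂ) ^ (-(19*s+4)))

set_option maxHeartbeats 1000000 in
def NCoeffs : List (ℕ × ℕ × ℤ) := [
  (2, 89, -1),
  (2, 95, -1),
  (3, 83, 1),
  (3, 85, 1),
  (3, 87, 1),
  (3, 89, 1),
  (3, 91, 1),
  (3, 93, 1),
  (4, 80, 1),
  (4, 81, 2),
  (4, 82, 3),
  (4, 83, 3),
  (4, 84, 3),
  (4, 85, 3),
  (4, 86, 2),
  (4, 87, 3),
  (4, 88, 3),
  (4, 89, -1),
  (5, 73, -1),
  (5, 74, -1),
  (5, 75, -4),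
  (5, 76, -4),
  (5, 77, -12),
  (5, 78, -15),
  (5, 79, -21),
  (5, 80, -18),
  (5, 81, -22),
  (5, 82, -16),
  (5, 83, -12),
  (5, 84, -8),
  (5, 85, -5),
  (5, 86, -3),
  (6, 69, 1),
  (6, 70, 1),
  (6, 71, 9),
  (6, 72, 14),
  (6, 73, 27),
  (6, 74, 33),
  (6, 75, 46),
  (6, 76, 48),
  (6, 77, 48),
  (6, 78, 37),
  (6, 79, 28),
  (6, 80, 15),
  (6, 81, 11),
  (6, 82, 8),
  (6, 83, 1),
  (7, 65, -1),
  (7, 66, -6),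
  (7, 67, -16),
  (7, 68, -31),
  (7, 69, -46),
  (7, 70, -63),
  (7, 71, -71),
  (7, 72, -77),
  (7, 73, -68),
  (7, 74, -57),
  (7, 75, -46),
  (7, 76, -31),
  (7, 77, -16),
  (7, 78, -7),
  (7, 79, -3),
  (7, 80, -2),
  (8, 59, 1),
  (8, 60, 4),
  (8, 61, 8),
  (8, 62, 21),
  (8, 63, 36),
  (8, 64, 67),
  (8, 65, 90),
  (8, 66, 119),
  (8, 67, 120),
  (8, 68, 128),
  (8, 69, 111),
  (8, 70, 101),
  (8, 71, 77),
  (8, 72, 54),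
  (8, 73, 34),
  (8, 74, 14),
  (8, 75, 8),
  (8, 76, 5),
  (8, 77, 1),
  (9, 55, -2),
  (9, 56, -7),
  (9, 57, -19),
  (9, 58, -44),
  (9, 59, -77),
  (9, 60, -121),
  (9, 61, -160),
  (9, 62, -201),
  (9, 63, -220),
  (9, 64, -230),
  (9, 65, -206),
  (9, 66, -175),
  (9, 67, -135),
  (9, 68, -90),
  (9, 69, -63),
  (9, 70, -33),
  (9, 71, -19),
  (9, 72, -5),
  (9, 73, -2),
  (10, 51, 1),
  (10, 52, 8),
  (10, 53, 29),
  (10, 54, 64),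
  (10, 55, 115),
  (10, 56, 170),
  (10, 57, 235),
  (10, 58, 283),
  (10, 59, 320),
  (10, 60, 316),
  (10, 61, 294),
  (10, 62, 239),
  (10, 63, 181),
  (10, 64, 118),
  (10, 65, 78),
  (10, 66, 37),
  (10, 67, 20),
  (10, 68, 2),
  (10, 69, 1),
  (11, 46, -3),
  (11, 47, -6),
  (11, 48, -20),
  (11, 49, -45),
  (11, 50, -90),
  (11, 51, -155),
  (11, 52, -226),
  (11, 53, -302),
  (11, 54, -343),
  (11, 55, -372),
  (11, 56, -349),
  (11, 57, -313),
  (11, 58, -250),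
  (11, 59, -180),
  (11, 60, -113),
  (11, 61, -60),
  (11, 62, -24),
  (11, 63, -6),
  (12, 42, 6),
  (12, 43, 15),
  (12, 44, 41),
  (12, 45, 79),
  (12, 46, 142),
  (12, 47, 216),
  (12, 48, 298),
  (12, 49, 370),
  (12, 50, 411),
  (12, 51, 416),
  (12, 52, 379),
  (12, 53, 320),
  (12, 54, 247),
  (12, 55, 166),
  (12, 56, 105),
  (12, 57, 41),
  (12, 58, 21),
  (12, 59, 3),
  (12, 60, 3),
  (13, 38, -3),
  (13, 39, -18),
  (13, 40, -51),
  (13, 41, -106),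
  (13, 42, -179),
  (13, 43, -266),
  (13, 44, -355),
  (13, 45, -424),
  (13, 46, -465),
  (13, 47, -466),
  (13, 48, -429),
  (13, 49, -361),
  (13, 50, -272),
  (13, 51, -177),
  (13, 52, -114),
  (13, 53, -57),
  (13, 54, -34),
  (13, 55, -10),
  (13, 56, -6),
  (14, 33, 3),
  (14, 34, 4),
  (14, 35, 22),
  (14, 36, 49),
  (14, 37, 109),
  (14, 38, 180),
  (14, 39, 276),
  (14, 40, 359),
  (14, 41, 429),
  (14, 42, 470),
  (14, 43, 475),
  (14, 44, 441),
  (14, 45, 368),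
  (14, 46, 273),
  (14, 47, 191),
  (14, 48, 118),
  (14, 49, 66),
  (14, 50, 32),
  (14, 51, 9),
  (14, 52, 3),
  (15, 29, -6),
  (15, 30, -13),
  (15, 31, -34),
  (15, 32, -63),
  (15, 33, -119),
  (15, 34, -183),
  (15, 35, -267),
  (15, 36, -346),
  (15, 37, -408),
  (15, 38, -444),
  (15, 39, -425),
  (15, 40, -383),
  (15, 41, -312),
  (15, 42, -231),
  (15, 43, -158),
  (15, 44, -85),
  (15, 45, -41),
  (15, 46, -11),
  (15, 47, -3),
  (15, 48, 1),
  (16, 25, 3),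
  (16, 26, 16),
  (16, 27, 39),
  (16, 28, 79),
  (16, 29, 127),
  (16, 30, 196),
  (16, 31, 261),
  (16, 32, 333),
  (16, 33, 368),
  (16, 34, 386),
  (16, 35, 352),
  (16, 36, 311),
  (16, 37, 231),
  (16, 38, 164),
  (16, 39, 94),
  (16, 40, 40),
  (16, 41, 15),
  (16, 42, -1),
  (16, 44, -1),
  (17, 20, -1),
  (17, 21, -1),
  (17, 22, -11),
  (17, 23, -27),
  (17, 24, -66),
  (17, 25, -106),
  (17, 26, -174),
  (17, 27, -224),
  (17, 28, -271),
  (17, 29, -292),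
  (17, 30, -300),
  (17, 31, -269),
  (17, 32, -228),
  (17, 33, -157),
  (17, 34, -101),
  (17, 35, -50),
  (17, 36, -21),
  (17, 37, -6),
  (17, 38, -1),
  (17, 39, -1),
  (18, 16, 2),
  (18, 17, 4),
  (18, 18, 10),
  (18, 19, 20),
  (18, 20, 44),
  (18, 21, 74),
  (18, 22, 116),
  (18, 23, 156),
  (18, 24, 185),
  (18, 25, 206),
  (18, 26, 199),
  (18, 27, 186),
  (18, 28, 142),
  (18, 29, 104),
  (18, 30, 65),
  (18, 31, 33),
  (18, 32, 17),
  (18, 33, 8),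
  (18, 34, 3),
  (18, 35, 1),
  (19, 12, -1),
  (19, 13, -5),
  (19, 14, -11),
  (19, 15, -22),
  (19, 16, -34),
  (19, 17, -57),
  (19, 18, -76),
  (19, 19, -104),
  (19, 20, -120),
  (19, 21, -142),
  (19, 22, -124),
  (19, 23, -123),
  (19, 24, -89),
  (19, 25, -70),
  (19, 26, -42),
  (19, 27, -27),
  (19, 28, -12),
  (19, 29, -5),
  (19, 30, -1),
  (20, 9, 2),
  (20, 10, 6),
  (20, 11, 16),
  (20, 12, 25),
  (20, 13, 43),
  (20, 14, 55),
  (20, 15, 71),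
  (20, 16, 79),
  (20, 17, 92),
  (20, 18, 83),
  (20, 19, 75),
  (20, 20, 55),
  (20, 21, 45),
  (20, 22, 24),
  (20, 23, 12),
  (20, 24, 4),
  (21, 6, -1),
  (21, 7, -5),
  (21, 8, -11),
  (21, 9, -20),
  (21, 10, -30),
  (21, 11, -39),
  (21, 12, -47),
  (21, 13, -44),
  (21, 14, -45),
  (21, 15, -38),
  (21, 16, -29),
  (21, 17, -16),
  (21, 18, -8),
  (22, 4, 2),
  (22, 5, 4),
  (22, 6, 9),
  (22, 7, 12),
  (22, 8, 18),
  (22, 9, 14),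
  (22, 10, 17),
  (22, 11, 11),
  (22, 12, 9),
  (23, 2, -1),
  (23, 3, -1),
  (23, 4, -3),
  (23, 5, -3),
  (23, 6, -4)]

def NsumExpr (P x : ℂ) : ℂ :=
  (NCoeffs.map (fun t => (t.2.2 : ℂ) * P ^ t.1 * x ^ t.2.1)).sum

lemma cpow_ks_c (p : ℕ) (hp : (p:ℂ) ≠ 0) (s : ℂ) (k c : ℕ) :
    (p:ℂ) ^ ((k:ℂ) * s + (c:ℂ)) = (p:ℂ) ^ c * (((p:ℂ) ^ (-s)) ^ k)⁻¹ := by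
  rw [Complex.cpow_add _ _ hp, Complex.cpow_natCast, Complex.cpow_nat_mul,
    Complex.cpow_neg, inv_pow, inv_inv, mul_comm]

lemma cpow_neg_ks_c (p : ℕ) (hp : (p:ℂ) ≠ 0) (s : ℂ) (k c : ℕ) :
    (p:ℂ) ^ (-((k:ℂ) * s + (c:ℂ))) = ((p:ℂ) ^ (-s)) ^ k * ((p:ℂ) ^ c)⁻¹ := by
  rw [Complex.cpow_neg, cpow_ks_c p hp s k c, mul_inv, inv_inv, mul_comm]

/-- combine the three fraction representations -/
lemma combine (fn a1 a2 bp fd P : ℂ) (hfd : fd ≠ 0) (hbp : bp ≠ 0) (hP : P ≠ 0)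
    (ha1 : a1 ≠ 0) (ha2 : a2 ≠ 0) :
    fn / fd / (P ^ 6 / a1 * (bp / (P ^ 8 * a2))) - 1
      = (fn * a1 * a2 * P ^ 2 - fd * bp) / (fd * bp) := by
  field_simp

set_option maxHeartbeats 4000000 in
set_option maxRecDepth 8000 in
/-- The big polynomial identity. -/
lemma key_poly (P x : ℂ) :
    ((-1) * x^12 + (-1) * P^1 * x^7 + (-1) * P^1 * x^8 + (-1) * P^1 * x^9 + (1) * P^2 * x^4 + (2) * P^2 * x^5 + (3) * P^2 * x^6 + (3) * P^2 * x^7 + (3) * P^2 * x^8 + (1) * P^2 * x^9 + (1) * P^2 * x^10 + (-1) * P^3 * x^2 + (-1) * P^3 * x^3 + (-3) * P^3 * x^4 + (-3) * P^3 * x^5 + (-3) * P^3 * x^6 + (-2) * P^3 * x^7 + (-1) * P^3 * x^8 + (1) * P^4 * x^3 + (1) * P^4 * x^4 + (1) * P^4 * x^5 + (1) * P^5) *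
        ((P - x^6) * (P - x^5) * (P - x^4)^2 * (P - x^3) * (P - x^2)) *
        ((P^3 - x^14) * (P^3 - x^13)^3) * P^2
      - (P^2 * ((P - x^2) * (P - x^4) * (P - x^6))) *
        ((P^2 - x^10) * (P^2 - x^9) * (P^2 - x^8)^3 * (P^2 - x^7)^3 * (P^4 - x^19))
      = NsumExpr P x := by
  simp only [NsumExpr, NCoeffs, List.map_cons, List.map_nil, List.sum_cons, List.sum_nil]
  push_cast
  ring


lemma seven (D n1 n2 n3 n4 n5 n6 N : ℂ) (hD : D ≠ 0)
    (h : D + n1 + n2 + n3 + n4 + n5 + n6 = N) :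
    1 + n1/D + n2/D + n3/D + n4/D + n5/D + n6/D = N/D := by
  rw [← h]
  field_simp

set_option maxHeartbeats 1000000 in
lemma Fcombine (P x a b c : ℂ) (hx : x ≠ 0) (hP : P ≠ 0) (ha : a ≠ 0) (hb : b ≠ 0)
    (hc : c ≠ 0) :
    1 + (1 - 1/P) / (a/x^2) + (1 - 1/P) / (b/x^4)
      + ((1 - 1/P) ^ 2 / (c/x^6)) * (P * (x^2)⁻¹ / (a/x^2) + 1 / (b/x^4))
      + P * (x^4)⁻¹ * (1 - 1/P) ^ 2 / ((a/x^2) * (c/x^6))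
      + P * (x^5)⁻¹ * (1 - 1/P) ^ 2 / ((b/x^4) * (c/x^6))
      + (x^3)⁻¹ * (1 - 1/P) / (c/x^6)
      = (P^2*(a*b*c) + (P-1)*x^2*P*(b*c) + (P-1)*x^4*P*(a*c)
          + ((P-1)^2*x^6*(P*b + x^4*a) + (P-1)^2*x^4*P*b + (P-1)^2*x^5*P*a
          + (P-1)*x^3*P*(a*b))) / (P^2 * (a*b*c)) := by
  have hD : P^2*(a*b*c) ≠ 0 :=
    mul_ne_zero (pow_ne_zero _ hP) (mul_ne_zero (mul_ne_zero ha hb) hc)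
  have hax : a/x^2 ≠ 0 := div_ne_zero ha (pow_ne_zero _ hx)
  have hbx : b/x^4 ≠ 0 := div_ne_zero hb (pow_ne_zero _ hx)
  have hcx : c/x^6 ≠ 0 := div_ne_zero hc (pow_ne_zero _ hx)
  have t1 : (1 - 1/P) / (a/x^2) = ((P-1)*x^2*P*(b*c))/(P^2*(a*b*c)) := by
    rw [div_eq_div_iff hax hD]; field_simp <;> ring
  have t2 : (1 - 1/P) / (b/x^4) = ((P-1)*x^4*P*(a*c))/(P^2*(a*b*c)) := by
    rw [div_eq_div_iff hbx hD]; field_simp <;> ring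
  have t3 : ((1 - 1/P) ^ 2 / (c/x^6)) * (P * (x^2)⁻¹ / (a/x^2) + 1 / (b/x^4))
      = ((P-1)^2*x^6*(P*b + x^4*a))/(P^2*(a*b*c)) := by
    have u1 : P * (x^2)⁻¹ / (a/x^2) = P/a := by
      rw [div_eq_div_iff hax ha]; field_simp <;> ring
    have u2 : (1:ℂ) / (b/x^4) = x^4/b := one_div_div _ _
    have u3 : (1 - 1/P) ^ 2 / (c/x^6) = ((P-1)^2*x^6)/(P^2*c) := by
      rw [div_eq_div_iff hcx (mul_ne_zero (pow_ne_zero _ hP) hc)]; field_simp <;> ring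
    rw [u1, u2, u3, div_add_div _ _ ha hb, div_mul_div_comm]
    rw [div_eq_div_iff (mul_ne_zero (mul_ne_zero (pow_ne_zero _ hP) hc)
      (mul_ne_zero ha hb)) hD]
    ring
  have t4 : P * (x^4)⁻¹ * (1 - 1/P) ^ 2 / ((a/x^2) * (c/x^6))
      = ((P-1)^2*x^4*P*b)/(P^2*(a*b*c)) := by
    rw [div_eq_div_iff (mul_ne_zero hax hcx) hD]; field_simp <;> ring
  have t5 : P * (x^5)⁻¹ * (1 - 1/P) ^ 2 / ((b/x^4) * (c/x^6))
      = ((P-1)^2*x^5*P*a)/(P^2*(a*b*c)) := by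
    rw [div_eq_div_iff (mul_ne_zero hbx hcx) hD]; field_simp <;> ring
  have t6 : (x^3)⁻¹ * (1 - 1/P) / (c/x^6) = ((P-1)*x^3*P*(a*b))/(P^2*(a*b*c)) := by
    rw [div_eq_div_iff hcx hD]; field_simp <;> ring
  rw [t1, t2, t3, t4, t5, t6]
  exact seven _ _ _ _ _ _ _ _ hD (by ring)

lemma E2combine (P b13 b14 c10 c9 c8 c7 d19 : ℂ) (hP : P ≠ 0) (h13 : b13 ≠ 0)
    (h14 : b14 ≠ 0) :
    (b14/P^3)⁻¹ * ((b13/P^3)⁻¹) ^ 3 * (c10/P^2) * (c9/P^2) * (c8/P^2) ^ 3 * (c7/P^2) ^ 3 *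
        (d19/P^4)
      = (c10*c9*c8^3*c7^3*d19) / (P^8*(b14*b13^3)) := by
  simp only [inv_div, div_pow, div_mul_div_comm]
  rw [div_eq_div_iff
    (mul_ne_zero (mul_ne_zero (mul_ne_zero (mul_ne_zero (mul_ne_zero
      (mul_ne_zero h14 (pow_ne_zero _ h13)) (pow_ne_zero _ hP)) (pow_ne_zero _ hP))
      (pow_ne_zero _ (pow_ne_zero _ hP))) (pow_ne_zero _ (pow_ne_zero _ hP)))
      (pow_ne_zero _ hP))
    (mul_ne_zero (pow_ne_zero _ hP) (mul_ne_zero h14 (pow_ne_zero _ h13)))]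
  ring

set_option maxHeartbeats 4000000 in
lemma hF_eq (P x : ℂ) (hP : P ≠ 0) (hx : x ≠ 0)
    (h2 : P - x^2 ≠ 0) (h4 : P - x^4 ≠ 0) (h6 : P - x^6 ≠ 0) :
    1 + (1 - 1/P) / (P * (x^2)⁻¹ - 1) + (1 - 1/P) / (P * (x^4)⁻¹ - 1)
      + ((1 - 1/P) ^ 2 / (P * (x^6)⁻¹ - 1)) *
          (P * (x^2)⁻¹ / (P * (x^2)⁻¹ - 1) + 1 / (P * (x^4)⁻¹ - 1))
      + P * (x^4)⁻¹ * (1 - 1/P) ^ 2 / ((P * (x^2)⁻¹ - 1) * (P * (x^6)⁻¹ - 1))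
      + P * (x^5)⁻¹ * (1 - 1/P) ^ 2 / ((P * (x^4)⁻¹ - 1) * (P * (x^6)⁻¹ - 1))
      + (x^3)⁻¹ * (1 - 1/P) / (P * (x^6)⁻¹ - 1)
      = ((-1) * x^12 + (-1) * P^1 * x^7 + (-1) * P^1 * x^8 + (-1) * P^1 * x^9 + (1) * P^2 * x^4 + (2) * P^2 * x^5 + (3) * P^2 * x^6 + (3) * P^2 * x^7 + (3) * P^2 * x^8 + (1) * P^2 * x^9 + (1) * P^2 * x^10 + (-1) * P^3 * x^2 + (-1) * P^3 * x^3 + (-3) * P^3 * x^4 + (-3) * P^3 * x^5 + (-3) * P^3 * x^6 + (-2) * P^3 * x^7 + (-1) * P^3 * x^8 + (1) * P^4 * x^3 + (1) * P^4 * x^4 + (1) * P^4 * x^5 + (1) * P^5) / (P^2 * ((P - x^2) * (P - x^4) * (P - x^6))) := by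
  have w2 : P * (x^2)⁻¹ - 1 = (P - x^2) / x^2 := by field_simp
  have w4 : P * (x^4)⁻¹ - 1 = (P - x^4) / x^4 := by field_simp
  have w6 : P * (x^6)⁻¹ - 1 = (P - x^6) / x^6 := by field_simp
  rw [w2, w4, w6, Fcombine P x (P - x^2) (P - x^4) (P - x^6) hx hP h2 h4 h6]
  congr 1
  ring

set_option maxHeartbeats 4000000 in
lemma hE1_eq (P x : ℂ) (hP : P ≠ 0)
    (h2 : P - x^2 ≠ 0) (h3 : P - x^3 ≠ 0) (h4 : P - x^4 ≠ 0) (h5 : P - x^5 ≠ 0)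
    (h6 : P - x^6 ≠ 0) :
    (1 - x^6 * P⁻¹)⁻¹ * (1 - x^5 * P⁻¹)⁻¹ * ((1 - x^4 * P⁻¹)⁻¹) ^ 2 *
        (1 - x^3 * P⁻¹)⁻¹ * (1 - x^2 * P⁻¹)⁻¹
      = P ^ 6 / ((P - x^6) * (P - x^5) * (P - x^4)^2 * (P - x^3) * (P - x^2)) := by
  have e6 : 1 - x^6 * P⁻¹ = (P - x^6) / P := by field_simp
  have e5 : 1 - x^5 * P⁻¹ = (P - x^5) / P := by field_simp
  have e4 : 1 - x^4 * P⁻¹ = (P - x^4) / P := by field_simp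
  have e3 : 1 - x^3 * P⁻¹ = (P - x^3) / P := by field_simp
  have e2 : 1 - x^2 * P⁻¹ = (P - x^2) / P := by field_simp
  rw [e6, e5, e4, e3, e2]
  field_simp

set_option maxHeartbeats 4000000 in
lemma hE2_eq (P x : ℂ) (hP : P ≠ 0)
    (g13 : P^3 - x^13 ≠ 0) (g14 : P^3 - x^14 ≠ 0) :
    (1 - x^14 * (P^3)⁻¹)⁻¹ * ((1 - x^13 * (P^3)⁻¹)⁻¹) ^ 3 * (1 - x^10 * (P^2)⁻¹) *
        (1 - x^9 * (P^2)⁻¹) * (1 - x^8 * (P^2)⁻¹) ^ 3 * (1 - x^7 * (P^2)⁻¹) ^ 3 *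
        (1 - x^19 * (P^4)⁻¹)
      = ((P^2 - x^10) * (P^2 - x^9) * (P^2 - x^8)^3 * (P^2 - x^7)^3 * (P^4 - x^19)) /
          (P ^ 8 * ((P^3 - x^14) * (P^3 - x^13)^3)) := by
  have e14 : 1 - x^14 * (P^3)⁻¹ = (P^3 - x^14) / P^3 := by field_simp
  have e13 : 1 - x^13 * (P^3)⁻¹ = (P^3 - x^13) / P^3 := by field_simp
  have e10 : 1 - x^10 * (P^2)⁻¹ = (P^2 - x^10) / P^2 := by field_simp
  have e9 : 1 - x^9 * (P^2)⁻¹ = (P^2 - x^9) / P^2 := by field_simp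
  have e8 : 1 - x^8 * (P^2)⁻¹ = (P^2 - x^8) / P^2 := by field_simp
  have e7 : 1 - x^7 * (P^2)⁻¹ = (P^2 - x^7) / P^2 := by field_simp
  have e19 : 1 - x^19 * (P^4)⁻¹ = (P^4 - x^19) / P^4 := by field_simp
  rw [e14, e13, e10, e9, e8, e7, e19,
    E2combine P (P^3 - x^13) (P^3 - x^14) (P^2 - x^10) (P^2 - x^9) (P^2 - x^8) (P^2 - x^7)
      (P^4 - x^19) hP g13 g14]

set_option maxHeartbeats 4000000 in
/-- The main algebraic identity. -/
lemma main_ident (P x : ℂ) (hP : P ≠ 0) (hx : x ≠ 0)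
    (h2 : P - x^2 ≠ 0) (h3 : P - x^3 ≠ 0) (h4 : P - x^4 ≠ 0) (h5 : P - x^5 ≠ 0)
    (h6 : P - x^6 ≠ 0)
    (g7 : P^2 - x^7 ≠ 0) (g8 : P^2 - x^8 ≠ 0) (g9 : P^2 - x^9 ≠ 0)
    (g10 : P^2 - x^10 ≠ 0) (g13 : P^3 - x^13 ≠ 0) (g14 : P^3 - x^14 ≠ 0)
    (g19 : P^4 - x^19 ≠ 0) :
    (1 + (1 - 1/P) / (P * (x^2)⁻¹ - 1) + (1 - 1/P) / (P * (x^4)⁻¹ - 1)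
      + ((1 - 1/P) ^ 2 / (P * (x^6)⁻¹ - 1)) *
          (P * (x^2)⁻¹ / (P * (x^2)⁻¹ - 1) + 1 / (P * (x^4)⁻¹ - 1))
      + P * (x^4)⁻¹ * (1 - 1/P) ^ 2 / ((P * (x^2)⁻¹ - 1) * (P * (x^6)⁻¹ - 1))
      + P * (x^5)⁻¹ * (1 - 1/P) ^ 2 / ((P * (x^4)⁻¹ - 1) * (P * (x^6)⁻¹ - 1))
      + (x^3)⁻¹ * (1 - 1/P) / (P * (x^6)⁻¹ - 1)) /
      ((1 - x^6 * P⁻¹)⁻¹ * (1 - x^5 * P⁻¹)⁻¹ * ((1 - x^4 * P⁻¹)⁻¹) ^ 2 *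
          (1 - x^3 * P⁻¹)⁻¹ * (1 - x^2 * P⁻¹)⁻¹ *
        ((1 - x^14 * (P^3)⁻¹)⁻¹ * ((1 - x^13 * (P^3)⁻¹)⁻¹) ^ 3 * (1 - x^10 * (P^2)⁻¹) *
          (1 - x^9 * (P^2)⁻¹) * (1 - x^8 * (P^2)⁻¹) ^ 3 * (1 - x^7 * (P^2)⁻¹) ^ 3 *
          (1 - x^19 * (P^4)⁻¹))) - 1
    = NsumExpr P x /
        (P^2 * ((P - x^2) * (P - x^4) * (P - x^6)) *
          ((P^2 - x^10) * (P^2 - x^9) * (P^2 - x^8)^3 * (P^2 - x^7)^3 * (P^4 - x^19))) := by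
  have hfd : P^2 * ((P - x^2) * (P - x^4) * (P - x^6)) ≠ 0 :=
    mul_ne_zero (pow_ne_zero _ hP) (mul_ne_zero (mul_ne_zero h2 h4) h6)
  have hbp : (P^2 - x^10) * (P^2 - x^9) * (P^2 - x^8)^3 * (P^2 - x^7)^3 * (P^4 - x^19) ≠ 0 :=
    mul_ne_zero (mul_ne_zero (mul_ne_zero (mul_ne_zero g10 g9)
      (pow_ne_zero _ g8)) (pow_ne_zero _ g7)) g19
  have ha1 : (P - x^6) * (P - x^5) * (P - x^4)^2 * (P - x^3) * (P - x^2) ≠ 0 :=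
    mul_ne_zero (mul_ne_zero (mul_ne_zero (mul_ne_zero h6 h5)
      (pow_ne_zero _ h4)) h3) h2
  have ha2 : (P^3 - x^14) * (P^3 - x^13)^3 ≠ 0 :=
    mul_ne_zero g14 (pow_ne_zero _ g13)
  rw [hF_eq P x hP hx h2 h4 h6, hE1_eq P x hP h2 h3 h4 h5 h6, hE2_eq P x hP g13 g14,
    combine _ _ _ _ _ _ hfd hbp hP ha1 ha2, key_poly P x]

lemma term_bound {p : ℕ} (hp : 2 ≤ p) {x : ℂ} {ε : ℝ} (hε : 0 < ε)
    (hx : ‖x‖ ≤ (p:ℝ) ^ ((1:ℝ)/6 - ε)) (a b : ℕ) (c : ℤ) (hb : 2 ≤ b)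
    (hab : 6*a + b ≤ 144) :
    ‖(c:ℂ) * (p:ℂ) ^ a * x ^ b‖ ≤ (c.natAbs : ℝ) * (p:ℝ) ^ ((24:ℝ) - 2*ε) := by
  have hp0 : (0:ℝ) < (p:ℝ) := by positivity
  have hp1 : (1:ℝ) ≤ (p:ℝ) := by exact_mod_cast Nat.one_le_of_lt hp
  have hxnn : (0:ℝ) ≤ ‖x‖ := norm_nonneg x
  rw [norm_mul, norm_mul, norm_pow, norm_pow, Complex.norm_intCast, Complex.norm_natCast]
  have h1 : ‖x‖ ^ b ≤ ((p:ℝ) ^ ((1:ℝ)/6 - ε)) ^ b := pow_le_pow_left₀ hxnn hx b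
  have h2 : (p:ℝ) ^ a * ((p:ℝ) ^ ((1:ℝ)/6 - ε)) ^ b = (p:ℝ) ^ ((a:ℝ) + ((1:ℝ)/6 - ε) * b) := by
    rw [← Real.rpow_natCast ((p:ℝ) ^ ((1:ℝ)/6 - ε)) b, ← Real.rpow_mul (le_of_lt hp0),
      ← Real.rpow_natCast (p:ℝ) a, ← Real.rpow_add hp0]
  have h3 : (a:ℝ) + ((1:ℝ)/6 - ε) * b ≤ (24:ℝ) - 2*ε := by
    have hab' : 6*(a:ℝ) + (b:ℝ) ≤ 144 := by exact_mod_cast hab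
    have hb' : (2:ℝ) ≤ (b:ℝ) := by exact_mod_cast hb
    nlinarith
  have h4 : (p:ℝ) ^ ((a:ℝ) + ((1:ℝ)/6 - ε) * b) ≤ (p:ℝ) ^ ((24:ℝ) - 2*ε) :=
    Real.rpow_le_rpow_of_exponent_le hp1 h3
  calc |(c:ℝ)| * (p:ℝ) ^ a * ‖x‖ ^ b
      ≤ |(c:ℝ)| * (p:ℝ) ^ a * ((p:ℝ) ^ ((1:ℝ)/6 - ε)) ^ b := by
        apply mul_le_mul_of_nonneg_left h1; positivity
    _ = |(c:ℝ)| * ((p:ℝ) ^ a * ((p:ℝ) ^ ((1:ℝ)/6 - ε)) ^ b) := by ring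
    _ ≤ |(c:ℝ)| * (p:ℝ) ^ ((24:ℝ) - 2*ε) := by
        rw [h2]; exact mul_le_mul_of_nonneg_left h4 (abs_nonneg _)
    _ = (c.natAbs : ℝ) * (p:ℝ) ^ ((24:ℝ) - 2*ε) := by
        congr 1
        simp [Nat.cast_natAbs]

lemma sum_bound {p : ℕ} (hp : 2 ≤ p) {x : ℂ} {ε : ℝ} (hε : 0 < ε)
    (hx : ‖x‖ ≤ (p:ℝ) ^ ((1:ℝ)/6 - ε)) :
    ∀ L : List (ℕ × ℕ × ℤ), (∀ t ∈ L, 2 ≤ t.2.1 ∧ 6*t.1 + t.2.1 ≤ 144) →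
      ‖(L.map (fun t => (t.2.2 : ℂ) * (p:ℂ) ^ t.1 * x ^ t.2.1)).sum‖
        ≤ ((L.map (fun t => (t.2.2.natAbs : ℝ))).sum) * (p:ℝ) ^ ((24:ℝ) - 2*ε) := by
  intro L
  induction L with
  | nil => intro _; simp
  | cons t ts ih =>
    intro hall
    have ht := hall t List.mem_cons_self
    have hts := fun u hu => hall u (List.mem_cons_of_mem t hu)
    simp only [List.map_cons, List.sum_cons]
    calc ‖(t.2.2 : ℂ) * (p:ℂ) ^ t.1 * x ^ t.2.1 +
            (ts.map (fun t => (t.2.2 : ℂ) * (p:ℂ) ^ t.1 * x ^ t.2.1)).sum‖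
        ≤ ‖(t.2.2 : ℂ) * (p:ℂ) ^ t.1 * x ^ t.2.1‖ +
            ‖(ts.map (fun t => (t.2.2 : ℂ) * (p:ℂ) ^ t.1 * x ^ t.2.1)).sum‖ := norm_add_le _ _
      _ ≤ (t.2.2.natAbs : ℝ) * (p:ℝ) ^ ((24:ℝ) - 2*ε) +
            ((ts.map (fun t => (t.2.2.natAbs : ℝ))).sum) * (p:ℝ) ^ ((24:ℝ) - 2*ε) :=
          add_le_add (term_bound hp hε hx t.1 t.2.1 t.2.2 ht.1 ht.2) (ih hts)
      _ = ((t.2.2.natAbs : ℝ) + (ts.map (fun t => (t.2.2.natAbs : ℝ))).sum) *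
            (p:ℝ) ^ ((24:ℝ) - 2*ε) := by ring

set_option maxHeartbeats 4000000 in
set_option maxRecDepth 100000 in
lemma coeff_sum_eq : ((NCoeffs.map (fun t => (t.2.2.natAbs : ℝ))).sum) = 32792 := by
  simp only [NCoeffs, List.map_cons, List.map_nil, List.sum_cons, List.sum_nil]
  norm_num

set_option maxHeartbeats 1000000 in
set_option maxRecDepth 100000 in
lemma coeffs_good : ∀ t ∈ NCoeffs, 2 ≤ t.2.1 ∧ 6*t.1 + t.2.1 ≤ 144 := by decide

/-- Lower bound for the factors of the denominator. -/
lemma factor_lb {p : ℕ} (hp : 2 ≤ p) {x : ℂ} {ε : ℝ} (hε0 : 0 < ε)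
    (hx : ‖x‖ ≤ (p:ℝ) ^ ((1:ℝ)/6 - ε)) (c k : ℕ) (hc : 1 ≤ c) (hk : k ≤ 6*c) :
    (p:ℝ) ^ c * (1 - (2:ℝ) ^ (-(min (6*ε) (1/6)))) ≤ ‖((p:ℂ)) ^ c - x ^ k‖ := by
  have hp0 : (0:ℝ) < (p:ℝ) := by positivity
  have hp1 : (1:ℝ) ≤ (p:ℝ) := by exact_mod_cast Nat.one_le_of_lt hp
  have hp2 : (2:ℝ) ≤ (p:ℝ) := by exact_mod_cast hp
  have hxk : ‖x ^ k‖ ≤ (p:ℝ) ^ ((k:ℝ) * ((1:ℝ)/6 - ε)) := by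
    rw [norm_pow]
    calc ‖x‖ ^ k ≤ ((p:ℝ) ^ ((1:ℝ)/6 - ε)) ^ k := pow_le_pow_left₀ (norm_nonneg x) hx k
      _ = (p:ℝ) ^ ((k:ℝ) * ((1:ℝ)/6 - ε)) := by
          rw [← Real.rpow_natCast ((p:ℝ) ^ ((1:ℝ)/6 - ε)) k, ← Real.rpow_mul (le_of_lt hp0),
            mul_comm]
  have hexp : (k:ℝ) * ((1:ℝ)/6 - ε) - c ≤ -(min (6*ε) (1/6)) := by
    rcases eq_or_lt_of_le hk with heq | hlt
    · have hk6 : (k:ℝ) = 6*(c:ℝ) := by exact_mod_cast heq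
      rw [hk6]
      have hc1 : (1:ℝ) ≤ (c:ℝ) := by exact_mod_cast hc
      have hmin : min (6*ε) (1/6) ≤ 6*ε := min_le_left _ _
      nlinarith
    · have hk' : (k:ℝ) ≤ 6*(c:ℝ) - 1 := by
        have h1 : k + 1 ≤ 6*c := hlt
        have h2 := (Nat.cast_le (α := ℝ)).2 h1
        push_cast at h2
        linarith
      have hmin : min (6*ε) (1/6) ≤ 1/6 := min_le_right _ _
      have hknn : (0:ℝ) ≤ (k:ℝ) := Nat.cast_nonneg k
      nlinarith
  have hsmall : (p:ℝ) ^ ((k:ℝ) * ((1:ℝ)/6 - ε)) ≤ (p:ℝ) ^ (c:ℝ) * (2:ℝ) ^ (-(min (6*ε) (1/6))) := by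
    have h1 : (p:ℝ) ^ ((k:ℝ) * ((1:ℝ)/6 - ε)) ≤ (p:ℝ) ^ ((c:ℝ) + (-(min (6*ε) (1/6)))) := by
      apply Real.rpow_le_rpow_of_exponent_le hp1
      linarith
    rw [Real.rpow_add hp0] at h1
    refine h1.trans ?_
    apply mul_le_mul_of_nonneg_left _ (Real.rpow_nonneg (le_of_lt hp0) _)
    rw [Real.rpow_neg (le_of_lt hp0), Real.rpow_neg (by norm_num : (0:ℝ) ≤ 2)]
    apply inv_anti₀
    · apply Real.rpow_pos_of_pos; norm_num
    · exact Real.rpow_le_rpow (by norm_num) hp2 (le_of_lt (lt_min (by linarith) (by norm_num)))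
  calc (p:ℝ) ^ c * (1 - (2:ℝ) ^ (-(min (6*ε) (1/6))))
      = (p:ℝ) ^ c - (p:ℝ) ^ (c:ℝ) * (2:ℝ) ^ (-(min (6*ε) (1/6))) := by
        rw [← Real.rpow_natCast (p:ℝ) c]; ring
    _ ≤ (p:ℝ) ^ c - ‖x ^ k‖ := by
        have := hxk.trans hsmall
        linarith
    _ = ‖((p:ℂ)) ^ c‖ - ‖x ^ k‖ := by
        simp [norm_pow]
    _ ≤ ‖((p:ℂ)) ^ c - x ^ k‖ := norm_sub_norm_le _ _

lemma denom_lb (P x : ℂ) (pr m : ℝ) (hpr : 0 ≤ pr) (hm : 0 ≤ m) (hP : ‖P‖ = pr)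
    (l2 : pr*m ≤ ‖P - x^2‖) (l4 : pr*m ≤ ‖P - x^4‖) (l6 : pr*m ≤ ‖P - x^6‖)
    (l10 : pr^2*m ≤ ‖P^2 - x^10‖) (l9 : pr^2*m ≤ ‖P^2 - x^9‖) (l8 : pr^2*m ≤ ‖P^2 - x^8‖)
    (l7 : pr^2*m ≤ ‖P^2 - x^7‖) (l19 : pr^4*m ≤ ‖P^4 - x^19‖) :
    pr^25 * m^12 ≤ ‖P^2 * ((P - x^2) * (P - x^4) * (P - x^6)) *
        ((P^2 - x^10) * (P^2 - x^9) * (P^2 - x^8)^3 * (P^2 - x^7)^3 * (P^4 - x^19))‖ := by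
  have hprm : 0 ≤ pr*m := mul_nonneg hpr hm
  have hpr2m : 0 ≤ pr^2*m := mul_nonneg (by positivity) hm
  have hpr4m : 0 ≤ pr^4*m := mul_nonneg (by positivity) hm
  have i1 : (pr*m)*(pr*m)*(pr*m) ≤ ‖P - x^2‖ * ‖P - x^4‖ * ‖P - x^6‖ :=
    mul_le_mul (mul_le_mul l2 l4 hprm (norm_nonneg _)) l6 hprm (by positivity)
  have i8 : (pr^2*m)^3 ≤ ‖P^2 - x^8‖^3 := pow_le_pow_left₀ hpr2m l8 3
  have i7 : (pr^2*m)^3 ≤ ‖P^2 - x^7‖^3 := pow_le_pow_left₀ hpr2m l7 3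
  have i2 : (pr^2*m)*(pr^2*m)*(pr^2*m)^3*(pr^2*m)^3*(pr^4*m)
      ≤ ‖P^2 - x^10‖ * ‖P^2 - x^9‖ * ‖P^2 - x^8‖^3 * ‖P^2 - x^7‖^3 * ‖P^4 - x^19‖ :=
    mul_le_mul
      (mul_le_mul
        (mul_le_mul (mul_le_mul l10 l9 hpr2m (norm_nonneg _)) i8
          (pow_nonneg hpr2m 3) (by positivity))
        i7 (pow_nonneg hpr2m 3) (by positivity))
      l19 hpr4m (by positivity)
  have ibig : 0 ≤ (pr^2*m)*(pr^2*m)*(pr^2*m)^3*(pr^2*m)^3*(pr^4*m) :=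
    mul_nonneg (mul_nonneg (mul_nonneg (mul_nonneg hpr2m hpr2m)
      (pow_nonneg hpr2m 3)) (pow_nonneg hpr2m 3)) hpr4m
  have itop : pr^2 * ((pr*m)*(pr*m)*(pr*m)) *
        ((pr^2*m)*(pr^2*m)*(pr^2*m)^3*(pr^2*m)^3*(pr^4*m))
      ≤ pr^2 * (‖P - x^2‖ * ‖P - x^4‖ * ‖P - x^6‖) *
        (‖P^2 - x^10‖ * ‖P^2 - x^9‖ * ‖P^2 - x^8‖^3 * ‖P^2 - x^7‖^3 * ‖P^4 - x^19‖) :=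
    mul_le_mul (mul_le_mul_of_nonneg_left i1 (by positivity)) i2 ibig
      (mul_nonneg (by positivity) (by positivity))
  calc pr^25 * m^12
      = pr^2 * ((pr*m)*(pr*m)*(pr*m)) *
          ((pr^2*m)*(pr^2*m)*(pr^2*m)^3*(pr^2*m)^3*(pr^4*m)) := by ring
    _ ≤ pr^2 * (‖P - x^2‖ * ‖P - x^4‖ * ‖P - x^6‖) *
          (‖P^2 - x^10‖ * ‖P^2 - x^9‖ * ‖P^2 - x^8‖^3 * ‖P^2 - x^7‖^3 * ‖P^4 - x^19‖) := itop
    _ = ‖P^2 * ((P - x^2) * (P - x^4) * (P - x^6)) *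
          ((P^2 - x^10) * (P^2 - x^9) * (P^2 - x^8)^3 * (P^2 - x^7)^3 * (P^4 - x^19))‖ := by
        simp only [norm_mul, norm_pow, hP]

set_option maxHeartbeats 1000000 in
theorem stmt17 (ε : ℝ) (hε0 : 0 < ε) (hε1 : ε < 1/6) :
    ∃ C : ℝ, 0 < C ∧ ∀ p : ℕ, p.Prime → ∀ s : ℂ, -1/6 + ε ≤ s.re →
      ‖FpExpr p s / (E1p p s * E2p p s) - 1‖ ≤ C * (p : ℝ) ^ (-1 - ε) := by
  have hμ0 : 0 < min (6*ε) (1/6) := lt_min (by linarith) (by norm_num)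
  set m : ℝ := 1 - (2:ℝ) ^ (-(min (6*ε) (1/6))) with hmdef
  have hm0 : 0 < m := by
    have h1 : (2:ℝ) ^ (-(min (6*ε) (1/6))) < 1 :=
      Real.rpow_lt_one_of_one_lt_of_neg (by norm_num) (by linarith)
    rw [hmdef]; linarith
  have hm1 : m ≤ 1 := by
    have h1 : (0:ℝ) < (2:ℝ) ^ (-(min (6*ε) (1/6))) := Real.rpow_pos_of_pos (by norm_num) _
    rw [hmdef]; linarith
  clear_value m
  refine ⟨32792 / m ^ 12, div_pos (by norm_num) (pow_pos hm0 12), ?_⟩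
  intro p hp s hs
  have hp2 : 2 ≤ p := hp.two_le
  have hp0 : (0:ℝ) < (p:ℝ) := by positivity
  have hp1 : (1:ℝ) ≤ (p:ℝ) := by exact_mod_cast Nat.one_le_of_lt hp2
  have hpc0 : (p:ℂ) ≠ 0 := Nat.cast_ne_zero.2 (by omega)
  set x : ℂ := (p:ℂ) ^ (-s) with hxdef
  have hxnorm : ‖x‖ = (p:ℝ) ^ (-s.re) := by
    rw [hxdef, Complex.norm_natCast_cpow_of_pos (by omega), Complex.neg_re]
  have hxle : ‖x‖ ≤ (p:ℝ) ^ ((1:ℝ)/6 - ε) := by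
    rw [hxnorm]
    apply Real.rpow_le_rpow_of_exponent_le hp1
    linarith
  have hx0 : x ≠ 0 := by
    intro h
    rw [h, norm_zero] at hxnorm
    exact absurd hxnorm.symm (ne_of_gt (Real.rpow_pos_of_pos hp0 _))
  have flb : ∀ (c k : ℕ), 1 ≤ c → k ≤ 6*c →
      (p:ℝ) ^ c * m ≤ ‖((p:ℂ)) ^ c - x ^ k‖ := by
    intro c k hc hk
    rw [hmdef]
    exact factor_lb hp2 hε0 hxle c k hc hk
  have fne : ∀ (c k : ℕ), 1 ≤ c → k ≤ 6*c → (p:ℂ) ^ c - x ^ k ≠ 0 := by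
    intro c k hc hk h
    have h1 := flb c k hc hk
    rw [h, norm_zero] at h1
    have h2 : (0:ℝ) < (p:ℝ) ^ c * m := mul_pos (pow_pos hp0 c) hm0
    linarith
  have h2 := fne 1 2 le_rfl (by norm_num)
  have h3 := fne 1 3 le_rfl (by norm_num)
  have h4 := fne 1 4 le_rfl (by norm_num)
  have h5 := fne 1 5 le_rfl (by norm_num)
  have h6 := fne 1 6 le_rfl (by norm_num)
  simp only [pow_one] at h2 h3 h4 h5 h6
  have g7 := fne 2 7 (by norm_num) (by norm_num)
  have g8 := fne 2 8 (by norm_num) (by norm_num)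
  have g9 := fne 2 9 (by norm_num) (by norm_num)
  have g10 := fne 2 10 (by norm_num) (by norm_num)
  have g13 := fne 3 13 (by norm_num) (by norm_num)
  have g14 := fne 3 14 (by norm_num) (by norm_num)
  have g19 := fne 4 19 (by norm_num) (by norm_num)
  have eA : (p:ℂ) ^ (2*s+1) = (p:ℂ) * (x^2)⁻¹ := by
    have h := cpow_ks_c p hpc0 s 2 1
    rw [show ((2:ℕ):ℂ) * s + ((1:ℕ):ℂ) = 2*s+1 by push_cast; ring, pow_one] at h
    rw [h, hxdef]
  have eB : (p:ℂ) ^ (4*s+1) = (p:ℂ) * (x^4)⁻¹ := by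
    have h := cpow_ks_c p hpc0 s 4 1
    rw [show ((4:ℕ):ℂ) * s + ((1:ℕ):ℂ) = 4*s+1 by push_cast; ring, pow_one] at h
    rw [h, hxdef]
  have eC : (p:ℂ) ^ (6*s+1) = (p:ℂ) * (x^6)⁻¹ := by
    have h := cpow_ks_c p hpc0 s 6 1
    rw [show ((6:ℕ):ℂ) * s + ((1:ℕ):ℂ) = 6*s+1 by push_cast; ring, pow_one] at h
    rw [h, hxdef]
  have eD : (p:ℂ) ^ (5*s+1) = (p:ℂ) * (x^5)⁻¹ := by
    have h := cpow_ks_c p hpc0 s 5 1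
    rw [show ((5:ℕ):ℂ) * s + ((1:ℕ):ℂ) = 5*s+1 by push_cast; ring, pow_one] at h
    rw [h, hxdef]
  have eE : (p:ℂ) ^ (3*s) = (x^3)⁻¹ := by
    have h := cpow_ks_c p hpc0 s 3 0
    rw [show ((3:ℕ):ℂ) * s + ((0:ℕ):ℂ) = 3*s by push_cast; ring, pow_zero, one_mul] at h
    rw [h, hxdef]
  have nA : (p:ℂ) ^ (-(6*s+1)) = x^6 * (p:ℂ)⁻¹ := by
    have h := cpow_neg_ks_c p hpc0 s 6 1
    rw [show ((6:ℕ):ℂ) * s + ((1:ℕ):ℂ) = 6*s+1 by push_cast; ring, pow_one] at h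
    rw [h, hxdef]
  have nB : (p:ℂ) ^ (-(5*s+1)) = x^5 * (p:ℂ)⁻¹ := by
    have h := cpow_neg_ks_c p hpc0 s 5 1
    rw [show ((5:ℕ):ℂ) * s + ((1:ℕ):ℂ) = 5*s+1 by push_cast; ring, pow_one] at h
    rw [h, hxdef]
  have nC : (p:ℂ) ^ (-(4*s+1)) = x^4 * (p:ℂ)⁻¹ := by
    have h := cpow_neg_ks_c p hpc0 s 4 1
    rw [show ((4:ℕ):ℂ) * s + ((1:ℕ):ℂ) = 4*s+1 by push_cast; ring, pow_one] at h
    rw [h, hxdef]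
  have nD : (p:ℂ) ^ (-(3*s+1)) = x^3 * (p:ℂ)⁻¹ := by
    have h := cpow_neg_ks_c p hpc0 s 3 1
    rw [show ((3:ℕ):ℂ) * s + ((1:ℕ):ℂ) = 3*s+1 by push_cast; ring, pow_one] at h
    rw [h, hxdef]
  have nE : (p:ℂ) ^ (-(2*s+1)) = x^2 * (p:ℂ)⁻¹ := by
    have h := cpow_neg_ks_c p hpc0 s 2 1
    rw [show ((2:ℕ):ℂ) * s + ((1:ℕ):ℂ) = 2*s+1 by push_cast; ring, pow_one] at h
    rw [h, hxdef]
  have n14 : (p:ℂ) ^ (-(14*s+3)) = x^14 * ((p:ℂ)^3)⁻¹ := by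
    have h := cpow_neg_ks_c p hpc0 s 14 3
    rw [show ((14:ℕ):ℂ) * s + ((3:ℕ):ℂ) = 14*s+3 by push_cast; ring] at h
    rw [h, hxdef]
  have n13 : (p:ℂ) ^ (-(13*s+3)) = x^13 * ((p:ℂ)^3)⁻¹ := by
    have h := cpow_neg_ks_c p hpc0 s 13 3
    rw [show ((13:ℕ):ℂ) * s + ((3:ℕ):ℂ) = 13*s+3 by push_cast; ring] at h
    rw [h, hxdef]
  have n10 : (p:ℂ) ^ (-(10*s+2)) = x^10 * ((p:ℂ)^2)⁻¹ := by
    have h := cpow_neg_ks_c p hpc0 s 10 2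
    rw [show ((10:ℕ):ℂ) * s + ((2:ℕ):ℂ) = 10*s+2 by push_cast; ring] at h
    rw [h, hxdef]
  have n9 : (p:ℂ) ^ (-(9*s+2)) = x^9 * ((p:ℂ)^2)⁻¹ := by
    have h := cpow_neg_ks_c p hpc0 s 9 2
    rw [show ((9:ℕ):ℂ) * s + ((2:ℕ):ℂ) = 9*s+2 by push_cast; ring] at h
    rw [h, hxdef]
  have n8 : (p:ℂ) ^ (-(8*s+2)) = x^8 * ((p:ℂ)^2)⁻¹ := by
    have h := cpow_neg_ks_c p hpc0 s 8 2
    rw [show ((8:ℕ):ℂ) * s + ((2:ℕ):ℂ) = 8*s+2 by push_cast; ring] at h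
    rw [h, hxdef]
  have n7 : (p:ℂ) ^ (-(7*s+2)) = x^7 * ((p:ℂ)^2)⁻¹ := by
    have h := cpow_neg_ks_c p hpc0 s 7 2
    rw [show ((7:ℕ):ℂ) * s + ((2:ℕ):ℂ) = 7*s+2 by push_cast; ring] at h
    rw [h, hxdef]
  have n19 : (p:ℂ) ^ (-(19*s+4)) = x^19 * ((p:ℂ)^4)⁻¹ := by
    have h := cpow_neg_ks_c p hpc0 s 19 4
    rw [show ((19:ℕ):ℂ) * s + ((4:ℕ):ℂ) = 19*s+4 by push_cast; ring] at h
    rw [h, hxdef]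
  unfold FpExpr E1p E2p
  rw [eA, eB, eC, eD, eE, nA, nB, nC, nD, nE, n14, n13, n10, n9, n8, n7, n19]
  rw [main_ident (p:ℂ) x hpc0 hx0 h2 h3 h4 h5 h6 g7 g8 g9 g10 g13 g14 g19]
  rw [norm_div]
  have hNb : ‖NsumExpr (p:ℂ) x‖ ≤ 32792 * (p:ℝ) ^ ((24:ℝ) - 2*ε) := by
    rw [NsumExpr]
    have h := sum_bound hp2 hε0 hxle NCoeffs coeffs_good
    rwa [coeff_sum_eq] at h
  have hDb : (p:ℝ)^25 * m^12 ≤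
      ‖(p:ℂ)^2 * (((p:ℂ) - x^2) * ((p:ℂ) - x^4) * ((p:ℂ) - x^6)) *
        (((p:ℂ)^2 - x^10) * ((p:ℂ)^2 - x^9) * ((p:ℂ)^2 - x^8)^3 * ((p:ℂ)^2 - x^7)^3 *
          ((p:ℂ)^4 - x^19))‖ := by
    have l2 := flb 1 2 le_rfl (by norm_num)
    have l4 := flb 1 4 le_rfl (by norm_num)
    have l6 := flb 1 6 le_rfl (by norm_num)
    simp only [pow_one] at l2 l4 l6
    have l10 := flb 2 10 (by norm_num) (by norm_num)
    have l9 := flb 2 9 (by norm_num) (by norm_num)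
    have l8 := flb 2 8 (by norm_num) (by norm_num)
    have l7 := flb 2 7 (by norm_num) (by norm_num)
    have l19 := flb 4 19 (by norm_num) (by norm_num)
    exact denom_lb (p:ℂ) x (p:ℝ) m (le_of_lt hp0) (le_of_lt hm0)
      (Complex.norm_natCast p) l2 l4 l6 l10 l9 l8 l7 l19
  have hDpos : (0:ℝ) < (p:ℝ)^25 * m^12 := mul_pos (pow_pos hp0 25) (pow_pos hm0 12)
  have hNnn : (0:ℝ) ≤ ‖NsumExpr (p:ℂ) x‖ := norm_nonneg _
  calc ‖NsumExpr (p:ℂ) x‖ /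
        ‖(p:ℂ)^2 * (((p:ℂ) - x^2) * ((p:ℂ) - x^4) * ((p:ℂ) - x^6)) *
          (((p:ℂ)^2 - x^10) * ((p:ℂ)^2 - x^9) * ((p:ℂ)^2 - x^8)^3 * ((p:ℂ)^2 - x^7)^3 *
            ((p:ℂ)^4 - x^19))‖
      ≤ (32792 * (p:ℝ) ^ ((24:ℝ) - 2*ε)) / ((p:ℝ)^25 * m^12) :=
        div_le_div₀ (by positivity) hNb hDpos hDb
    _ = (32792 / m ^ 12) * ((p:ℝ) ^ ((24:ℝ) - 2*ε) / (p:ℝ)^25) := by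
        ring
    _ ≤ (32792 / m ^ 12) * (p:ℝ) ^ (-1 - ε) := by
        apply mul_le_mul_of_nonneg_left _ (le_of_lt (div_pos (by norm_num) (pow_pos hm0 12)))
        rw [← Real.rpow_natCast (p:ℝ) 25, ← Real.rpow_sub hp0]
        apply Real.rpow_le_rpow_of_exponent_le hp1
        push_cast
        linarith

end
end

section
/- Let u, v ∈ ℂ⁵ be linearly independent vectors such that Q₁(su + tv) = 0 and Q₂(su + tv) = 0 for all s, t ∈ ℂ (i.e., the projective line through [u] and [v] lies on the surface Q₁ = Q₂ = 0). Then every vector w in the span of u and v satisfies w₀ = w₂ = w₃ = 0. In other words, the only line contained in the complex surface {Q₁ = Q₂ = 0} ⊂ ℙ⁴ is the line x₀ = x₂ = x₃ = 0. -/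
/-!
On the surface, `x₀ = 0` forces `x₂ = 0` (from `Q₁`) and then `x₃ = 0` (from `Q₂`), so it
suffices to show that `x₀` vanishes on a line `L` of the surface. If it did not, `L` would contain
a point `w` with `w₀ ≠ 0` and a point `z ≠ 0` with `z₀ = 0`, hence `z = (0, z₁, 0, 0, z₄)`. Then
`Q₁(w + z) = w₀z₁` and `Q₂(w + z) = w₀z₄` (the other cross terms vanish), so `z = 0`.
-/

noncomputable section

/-- The quadratic form `Q₁(x) = x₀x₁ - x₂²` over `ℂ`. -/
def Q1c (x : Fin 5 → ℂ) : ℂ := x 0 * x 1 - (x 2) ^ 2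

/-- The quadratic form `Q₂(x) = x₀x₄ - x₁x₂ + x₃²` over `ℂ`. -/
def Q2c (x : Fin 5 → ℂ) : ℂ := x 0 * x 4 - x 1 * x 2 + (x 3) ^ 2

def surface : Set (Fin 5 → ℂ) := {x | Q1c x = 0 ∧ Q2c x = 0}

lemma apply_two_three_eq_zero_of_mem_surface {x : Fin 5 → ℂ} (hx : x ∈ surface)
    (h0 : x 0 = 0) : x 2 = 0 ∧ x 3 = 0 := by
  obtain ⟨h1, h2⟩ := hx
  unfold Q1c at h1
  unfold Q2c at h2
  have h2' : x 2 = 0 := pow_eq_zero_iff two_ne_zero |>.mp (by linear_combination x 1 * h0 - h1)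
  exact ⟨h2', pow_eq_zero_iff two_ne_zero |>.mp
    (by linear_combination h2 - x 4 * h0 + x 1 * h2')⟩

lemma eq_zero_of_apply_zero_eq_zero {S : Submodule ℂ (Fin 5 → ℂ)}
    (hS : (S : Set (Fin 5 → ℂ)) ⊆ surface) {w z : Fin 5 → ℂ} (hw : w ∈ S) (hz : z ∈ S)
    (hw0 : w 0 ≠ 0) (hz0 : z 0 = 0) : z = 0 := by
  obtain ⟨hz2, hz3⟩ := apply_two_three_eq_zero_of_mem_surface (hS hz) hz0
  obtain ⟨hw1, hw2⟩ := hS hw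
  obtain ⟨hwz1, hwz2⟩ := hS (S.add_mem hw hz)
  simp only [Q1c, Q2c, Pi.add_apply] at hw1 hw2 hwz1 hwz2
  have hz1 : z 1 = 0 := (mul_eq_zero.mp (by
    linear_combination hwz1 - hw1 - (w 1 + z 1) * hz0 + (2 * w 2 + z 2) * hz2 :
      w 0 * z 1 = 0)).resolve_left hw0
  have hz4 : z 4 = 0 := (mul_eq_zero.mp (by
    linear_combination hwz2 - hw2 - (w 4 + z 4) * hz0 + (w 1 + z 1) * hz2 + w 2 * hz1
      - (2 * w 3 + z 3) * hz3 : w 0 * z 4 = 0)).resolve_left hw0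
  funext i
  fin_cases i <;> assumption

lemma apply_zero_eq_zero_of_linearIndependent {S : Submodule ℂ (Fin 5 → ℂ)}
    (hS : (S : Set (Fin 5 → ℂ)) ⊆ surface) {u v : Fin 5 → ℂ} (hu : u ∈ S) (hv : v ∈ S)
    (hind : LinearIndependent ℂ ![u, v]) : u 0 = 0 := by
  by_contra hu0
  have hz : v 0 • u + (-u 0) • v = 0 :=
    eq_zero_of_apply_zero_eq_zero hS hu (S.add_mem (S.smul_mem _ hu) (S.smul_mem _ hv)) hu0
      (by simp only [Pi.add_apply, Pi.smul_apply, smul_eq_mul]; ring)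
  exact hu0 (neg_eq_zero.mp (LinearIndependent.pair_iff.mp hind _ _ hz).2)

/-- The only line contained in the surface `Q₁ = Q₂ = 0 ⊂ ℙ⁴` is `x₀ = x₂ = x₃ = 0`. -/
theorem stmt19 (u v : Fin 5 → ℂ) (hind : LinearIndependent ℂ ![u, v])
    (hline : ∀ s t : ℂ, Q1c (s • u + t • v) = 0 ∧ Q2c (s • u + t • v) = 0) :
    ∀ w ∈ Submodule.span ℂ ({u, v} : Set (Fin 5 → ℂ)),
      w 0 = 0 ∧ w 2 = 0 ∧ w 3 = 0 := by
  set L := Submodule.span ℂ ({u, v} : Set (Fin 5 → ℂ))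
  have hL : (L : Set (Fin 5 → ℂ)) ⊆ surface := by
    intro w hw
    obtain ⟨s, t, rfl⟩ := Submodule.mem_span_pair.mp hw
    exact hline s t
  have hu : u ∈ L := Submodule.subset_span (Set.mem_insert u _)
  have hv : v ∈ L := Submodule.subset_span (Set.mem_insert_of_mem u rfl)
  have hu0 := apply_zero_eq_zero_of_linearIndependent hL hu hv hind
  have hv0 := apply_zero_eq_zero_of_linearIndependent hL hv hu
    (LinearIndependent.pair_symm_iff.mp hind)
  intro w hw
  have hw0 : w 0 = 0 := by
    obtain ⟨s, t, rfl⟩ := Submodule.mem_span_pair.mp hw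
    simp [hu0, hv0]
  exact ⟨hw0, apply_two_three_eq_zero_of_mem_surface (hL hw) hw0⟩

end
end
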